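/- arXiv:1702.00014 — 13 statements merged into one kernel-verified Lean document; each statement's English description precedes it below -/
import Mathlib

section
/- For integers n ≥ 2 and real r with 0 < r < 1, the function p ↦ (p^r + (n-1)^(1-r)·(1-p)^r)^(1/r) is strictly decreasing on [1/n, 1]. -/
theorem stmt_0 (n : ℕ) (hn : 2 ≤ n) (r : ℝ) (hr0 : 0 < r) (hr1 : r < 1) :
    StrictAntiOn
      (fun p : ℝ => (p ^ r + ((n : ℝ) - 1) ^ (1 - r) * (1 - p) ^ r) ^ (1 / r))
      (Set.Icc (1 / (n : ℝ)) 1) := by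
  have hn0 : (0 : ℝ) < n := by positivity
  have hn1 : (1 : ℝ) ≤ (n : ℝ) - 1 := by
    have : (2 : ℝ) ≤ n := by exact_mod_cast hn
    linarith
  set c : ℝ := ((n : ℝ) - 1) ^ (1 - r) with hc
  have hc0 : 0 < c := Real.rpow_pos_of_pos (by linarith) _
  have hinvn : 1 / (n : ℝ) > 0 := by positivity
  set g : ℝ → ℝ := fun p => p ^ r + c * (1 - p) ^ r with hg
  have hganti : StrictAntiOn g (Set.Icc (1 / (n : ℝ)) 1) := by
    apply strictAntiOn_of_deriv_neg (convex_Icc _ _)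
    · apply Continuous.continuousOn
      apply Continuous.add
      · exact continuous_id.rpow_const (fun x => Or.inr hr0.le)
      · exact continuous_const.mul ((continuous_const.sub continuous_id).rpow_const
          (fun x => Or.inr hr0.le))
    · intro p hp
      rw [interior_Icc] at hp
      obtain ⟨hpl, hpr⟩ := hp
      have hp0 : 0 < p := lt_trans hinvn hpl
      have h1p : 0 < 1 - p := by linarith
      have h1 : HasDerivAt (fun q : ℝ => q ^ r) (r * p ^ (r - 1)) p :=
        Real.hasDerivAt_rpow_const (Or.inl hp0.ne')
      have h2 : HasDerivAt (fun q : ℝ => 1 - q) (-1) p := by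
        simpa using (hasDerivAt_id p).const_sub 1
      have h3 : HasDerivAt (fun q : ℝ => (1 - q) ^ r)
          (r * (1 - p) ^ (r - 1) * (-1)) p :=
        (Real.hasDerivAt_rpow_const (Or.inl h1p.ne')).comp p h2
      have h4 : HasDerivAt g (r * p ^ (r - 1) + c * (r * (1 - p) ^ (r - 1) * (-1))) p :=
        h1.add (h3.const_mul c)
      rw [h4.deriv]
      have hkey : p ^ (r - 1) < c * (1 - p) ^ (r - 1) := by
        have e1 : p ^ (r - 1) = (p⁻¹) ^ (1 - r) := by
          rw [Real.inv_rpow hp0.le, ← Real.rpow_neg hp0.le]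
          norm_num
        have e2 : (1 - p) ^ (r - 1) = ((1 - p)⁻¹) ^ (1 - r) := by
          rw [Real.inv_rpow h1p.le, ← Real.rpow_neg h1p.le]
          norm_num
        rw [e1, e2, hc, ← Real.mul_rpow (by linarith) (by positivity)]
        apply Real.rpow_lt_rpow (by positivity) _ (by linarith)
        have hnp : 1 < p * (n : ℝ) := by
          rwa [div_lt_iff₀ hn0] at hpl
        rw [show p⁻¹ = 1 / p by ring,
          show ((n:ℝ) - 1) * (1 - p)⁻¹ = ((n:ℝ) - 1) / (1 - p) by ring,
          div_lt_div_iff₀ hp0 h1p]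
        nlinarith
      nlinarith [Real.rpow_pos_of_pos hp0 (r - 1), Real.rpow_pos_of_pos h1p (r - 1),
        mul_lt_mul_of_pos_left hkey hr0]
  intro a ha b hb hab
  have hga : 0 ≤ g a := by
    have ha0 : 0 < a := lt_of_lt_of_le hinvn ha.1
    have h1a : (0:ℝ) ≤ 1 - a := by linarith [ha.2]
    exact add_nonneg (Real.rpow_nonneg ha0.le r)
      (mul_nonneg hc0.le (Real.rpow_nonneg h1a r))
  have hgb : 0 ≤ g b := by
    have hb0 : 0 < b := lt_of_lt_of_le hinvn hb.1
    have h1b : (0:ℝ) ≤ 1 - b := by linarith [hb.2]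
    exact add_nonneg (Real.rpow_nonneg hb0.le r)
      (mul_nonneg hc0.le (Real.rpow_nonneg h1b r))
  exact Real.rpow_lt_rpow hgb (hganti ha hb hab) (by positivity)
end

section
/- For integers n ≥ 2 and real r with 1 < r < ∞, the function p ↦ (p^r + (n-1)^(1-r)·(1-p)^r)^(1/r) is strictly increasing on [1/n, 1]. -/
theorem stmt_1 (n : ℕ) (hn : 2 ≤ n) (r : ℝ) (hr : 1 < r) :
    StrictMonoOn
      (fun p : ℝ => (p ^ r + ((n : ℝ) - 1) ^ (1 - r) * (1 - p) ^ r) ^ (1 / r))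
      (Set.Icc (1 / (n : ℝ)) 1) := by
  have hn2 : (2:ℝ) ≤ (n:ℝ) := by exact_mod_cast hn
  have hn1 : (1:ℝ) ≤ (n:ℝ) - 1 := by linarith
  have hn0 : (0:ℝ) < (n:ℝ) - 1 := by linarith
  have hnpos : (0:ℝ) < (n:ℝ) := by linarith
  set c : ℝ := ((n:ℝ) - 1) ^ (1 - r) with hc
  have hcpos : 0 < c := Real.rpow_pos_of_pos hn0 _
  have hinner : StrictMonoOn (fun p : ℝ => p ^ r + c * (1 - p) ^ r)
      (Set.Icc (1 / (n : ℝ)) 1) := by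
    apply strictMonoOn_of_deriv_pos (convex_Icc _ _)
    · apply ContinuousOn.add
      · exact (continuous_id.rpow_const fun _ => Or.inr (by linarith)).continuousOn
      · exact (continuous_const.mul
          ((continuous_const.sub continuous_id).rpow_const
            fun _ => Or.inr (by linarith))).continuousOn
    · intro x hx
      rw [interior_Icc] at hx
      obtain ⟨hx1, hx2⟩ := hx
      have hx0 : 0 < x := lt_trans (by positivity) hx1
      have h1x : 0 < 1 - x := by linarith
      have h1 : HasDerivAt (fun p : ℝ => p ^ r) (r * x ^ (r - 1)) x :=
        Real.hasDerivAt_rpow_const (Or.inl hx0.ne')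
      have h2 : HasDerivAt (fun p : ℝ => (1 - p) ^ r)
          (r * (1 - x) ^ (r - 1) * (-1)) x := by
        have ha : HasDerivAt (fun p : ℝ => (1:ℝ) - p) (-1) x := by
          simpa using (hasDerivAt_id x).const_sub (1:ℝ)
        exact (Real.hasDerivAt_rpow_const (p := r) (Or.inl h1x.ne')).comp x ha
      have hD : HasDerivAt (fun p : ℝ => p ^ r + c * (1 - p) ^ r)
          (r * x ^ (r - 1) + c * (r * (1 - x) ^ (r - 1) * (-1))) x :=
        h1.add (h2.const_mul c)
      rw [hD.deriv]
      have hkey : c * (1 - x) ^ (r - 1) < x ^ (r - 1) := by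
        have hlt : (1 - x) / ((n:ℝ) - 1) < x := by
          rw [div_lt_iff₀ hn0]
          have : 1 < x * n := by
            rw [div_lt_iff₀ hnpos] at hx1
            linarith
          nlinarith
        have := Real.rpow_lt_rpow (by positivity) hlt (by linarith : (0:ℝ) < r - 1)
        rw [Real.div_rpow h1x.le hn0.le] at this
        have hcrw : c = (((n:ℝ) - 1) ^ (r - 1))⁻¹ := by
          rw [hc, ← Real.rpow_neg hn0.le]
          ring_nf
        rw [hcrw, mul_comm, ← div_eq_mul_inv]
        exact this
      have hr0 : 0 < r := by linarith
      nlinarith [mul_pos hr0 (sub_pos.mpr hkey)]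
  intro x hx y hy hxy
  have hfx : 0 ≤ x ^ r + c * (1 - x) ^ r := by
    have hx0 : 0 ≤ x := le_trans (by positivity) hx.1
    have h1x : 0 ≤ 1 - x := by linarith [hx.2]
    exact add_nonneg (Real.rpow_nonneg hx0 _)
      (mul_nonneg hcpos.le (Real.rpow_nonneg h1x _))
  exact Real.rpow_lt_rpow hfx (hinner hx hy hxy) (by positivity)
end

section
/- For every integer m ≥ 1 and real r with 0 < r < 1, the function p ↦ (⌊1/p⌋·p^r + (1 - ⌊1/p⌋·p)^r)^(1/r) is strictly decreasing on (0, 1]; for 1 < r < ∞ it is strictly increasing on (0, 1]. -/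
/-!
On `(1/(m+1), 1/m]` the floor `⌊1/p⌋` equals `m`, so `‖w(p)‖_r ^ r = m p^r + (1 - m p)^r`.
The derivative of this piece is `m r (p^(r-1) - (1 - m p)^(r-1))`, and inside the interval
`0 < 1 - m p < p`, so its sign is that of `r - 1`. The pieces agree at the breakpoints `1/m`
(for `r > 0`), hence the strict monotonicity glues across all of `(0, 1]`, and taking the
`1/r`-th power preserves it.
-/

open Set

noncomputable section

/-- `‖w(p)‖_r ^ r` on the piece `1/(m+1) < p ≤ 1/m`, where `⌊1/p⌋ = m`. -/
def piecePowSum (m : ℕ) (r p : ℝ) : ℝ := m * p ^ r + (1 - m * p) ^ r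

/-- `‖w(p)‖_r ^ r`. -/
def wPowSum (r p : ℝ) : ℝ := piecePowSum ⌊1 / p⌋₊ r p

end

theorem strictMonoOn_Ioc_of_strictMonoOn_Icc_one_div {β : Type*} [Preorder β] {f : ℝ → β}
    (h : ∀ m : ℕ, 0 < m → StrictMonoOn f (Icc (1 / (m + 1)) (1 / m))) :
    StrictMonoOn f (Ioc 0 1) := by
  have upto : ∀ n : ℕ, StrictMonoOn f (Icc (1 / (n + 1)) 1) := by
    intro n
    induction n with
    | zero => simp
    | succ n ih =>
      have hmid : (1 : ℝ) / (n + 1 + 1) ≤ 1 / (n + 1) :=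
        one_div_le_one_div_of_le (by positivity) (by linarith)
      have hone : (1 : ℝ) / (n + 1) ≤ 1 := by
        rw [div_le_one (by positivity)]; linarith [(n.cast_nonneg : (0 : ℝ) ≤ n)]
      have hpiece := h (n + 1) n.succ_pos
      push_cast at hpiece ⊢
      rw [← Icc_union_Icc_eq_Icc hmid hone]
      exact hpiece.union ih (isGreatest_Icc hmid) (isLeast_Icc hone)
  intro p hp q hq hpq
  have hlow : 1 / ((⌊1 / p⌋₊ : ℝ) + 1) ≤ p :=
    ((one_div_lt hp.1 (by positivity)).mp (Nat.lt_floor_add_one _)).le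
  exact upto ⌊1 / p⌋₊ ⟨hlow, hp.2⟩ ⟨hlow.trans hpq.le, hq.2⟩ hpq

theorem hasDerivAt_piecePowSum (m : ℕ) (r : ℝ) {p : ℝ} (hp : p ≠ 0) (hmp : 1 - m * p ≠ 0) :
    HasDerivAt (piecePowSum m r) (m * r * (p ^ (r - 1) - (1 - m * p) ^ (r - 1))) p := by
  have hlin : HasDerivAt (fun p : ℝ => 1 - m * p) (-m) p := by
    simpa using ((hasDerivAt_id p).const_mul (m : ℝ)).const_sub 1
  have h : HasDerivAt (piecePowSum m r)
      (m * (r * p ^ (r - 1)) + -m * r * (1 - m * p) ^ (r - 1)) p :=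
    ((Real.hasDerivAt_rpow_const (Or.inl hp)).const_mul (m : ℝ)).add (hlin.rpow_const (Or.inl hmp))
  exact h.congr_deriv (by ring)

theorem one_sub_mul_pos_and_lt_of_mem_Ioo {m : ℕ} (hm : 0 < m) {p : ℝ}
    (hp : p ∈ Ioo (1 / ((m : ℝ) + 1)) (1 / m)) : 0 < 1 - m * p ∧ 1 - m * p < p := by
  have hm' : (0 : ℝ) < m := by exact_mod_cast hm
  have h1 := (lt_div_iff₀ hm').mp hp.2
  have h2 := (div_lt_iff₀ (by positivity : (0 : ℝ) < m + 1)).mp hp.1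
  constructor <;> linarith

theorem piecePowSum_deriv_pos {m : ℕ} (hm : 0 < m) {r : ℝ} (hr : 1 < r) {p : ℝ}
    (hp : p ∈ Ioo (1 / ((m : ℝ) + 1)) (1 / m)) : 0 < deriv (piecePowSum m r) p := by
  obtain ⟨hpos, hlt⟩ := one_sub_mul_pos_and_lt_of_mem_Ioo hm hp
  rw [(hasDerivAt_piecePowSum m r (hpos.trans hlt).ne' hpos.ne').deriv]
  have : (1 - m * p) ^ (r - 1) < p ^ (r - 1) := Real.rpow_lt_rpow hpos.le hlt (by linarith)
  have : (0 : ℝ) < m := by exact_mod_cast hm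
  have : 0 < r := by linarith
  have : 0 < p ^ (r - 1) - (1 - m * p) ^ (r - 1) := by linarith
  positivity

theorem piecePowSum_deriv_neg {m : ℕ} (hm : 0 < m) {r : ℝ} (hr0 : 0 < r) (hr1 : r < 1) {p : ℝ}
    (hp : p ∈ Ioo (1 / ((m : ℝ) + 1)) (1 / m)) : deriv (piecePowSum m r) p < 0 := by
  obtain ⟨hpos, hlt⟩ := one_sub_mul_pos_and_lt_of_mem_Ioo hm hp
  rw [(hasDerivAt_piecePowSum m r (hpos.trans hlt).ne' hpos.ne').deriv]
  have : p ^ (r - 1) < (1 - m * p) ^ (r - 1) := Real.rpow_lt_rpow_of_neg hpos hlt (by linarith)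
  have : (0 : ℝ) < m := by exact_mod_cast hm
  exact mul_neg_of_pos_of_neg (by positivity) (by linarith)

theorem continuous_piecePowSum (m : ℕ) {r : ℝ} (hr : 0 ≤ r) : Continuous (piecePowSum m r) := by
  unfold piecePowSum
  fun_prop (disch := assumption)

theorem strictMonoOn_piecePowSum {m : ℕ} (hm : 0 < m) {r : ℝ} (hr : 1 < r) :
    StrictMonoOn (piecePowSum m r) (Icc (1 / ((m : ℝ) + 1)) (1 / m)) :=
  strictMonoOn_of_deriv_pos (convex_Icc _ _) (continuous_piecePowSum m (by linarith)).continuousOn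
    fun _ hp => piecePowSum_deriv_pos hm hr (by rwa [interior_Icc] at hp)

theorem strictAntiOn_piecePowSum {m : ℕ} (hm : 0 < m) {r : ℝ} (hr0 : 0 < r) (hr1 : r < 1) :
    StrictAntiOn (piecePowSum m r) (Icc (1 / ((m : ℝ) + 1)) (1 / m)) :=
  strictAntiOn_of_deriv_neg (convex_Icc _ _) (continuous_piecePowSum m hr0.le).continuousOn
    fun _ hp => piecePowSum_deriv_neg hm hr0 hr1 (by rwa [interior_Icc] at hp)

theorem wPowSum_eq_piecePowSum {m : ℕ} (hm : 0 < m) {r : ℝ} (hr : r ≠ 0) {p : ℝ}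
    (hp : p ∈ Icc (1 / ((m : ℝ) + 1)) (1 / m)) : wPowSum r p = piecePowSum m r p := by
  have hm' : (0 : ℝ) < m := by exact_mod_cast hm
  have hp0 : 0 < p := lt_of_lt_of_le (by positivity) hp.1
  rcases hp.1.eq_or_lt with rfl | hlt
  -- at the left endpoint `⌊1/p⌋ = m + 1`, and the two formulas agree because `0 ^ r = 0`
  · have hfloor : ⌊1 / (1 / ((m : ℝ) + 1))⌋₊ = m + 1 := by
      rw [one_div_one_div]; exact_mod_cast Nat.floor_natCast (R := ℝ) (m + 1)
    have hzero : 1 - ((m + 1 : ℕ) : ℝ) * (1 / (m + 1)) = 0 := by push_cast; field_simp; ring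
    have hlast : 1 - (m : ℝ) * (1 / (m + 1)) = 1 / (m + 1) := by field_simp; ring
    rw [wPowSum, hfloor, piecePowSum, piecePowSum, hzero, hlast, Real.zero_rpow hr]
    push_cast
    ring
  · have hfloor : ⌊1 / p⌋₊ = m := (Nat.floor_eq_iff (by positivity)).mpr
      ⟨(le_one_div hm' hp0).mpr hp.2, (one_div_lt hp0 (by positivity)).mpr hlt⟩
    rw [wPowSum, hfloor]

theorem wPowSum_nonneg (r : ℝ) {p : ℝ} (hp : 0 < p) : 0 ≤ wPowSum r p := by
  have : (⌊1 / p⌋₊ : ℝ) * p ≤ 1 := (le_div_iff₀ hp).mp (Nat.floor_le (by positivity))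
  have : 0 ≤ 1 - (⌊1 / p⌋₊ : ℝ) * p := by linarith
  unfold wPowSum piecePowSum
  positivity

theorem strictMonoOn_wPowSum {r : ℝ} (hr : 1 < r) : StrictMonoOn (wPowSum r) (Ioc 0 1) :=
  strictMonoOn_Ioc_of_strictMonoOn_Icc_one_div fun m hm =>
    (strictMonoOn_piecePowSum hm hr).congr
      fun _ hp => (wPowSum_eq_piecePowSum hm (by linarith) hp).symm

theorem strictAntiOn_wPowSum {r : ℝ} (hr0 : 0 < r) (hr1 : r < 1) :
    StrictAntiOn (wPowSum r) (Ioc 0 1) := by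
  rw [← strictMonoOn_toDual_comp_iff]
  refine strictMonoOn_Ioc_of_strictMonoOn_Icc_one_div fun m hm => ?_
  rw [strictMonoOn_toDual_comp_iff]
  exact (strictAntiOn_piecePowSum hm hr0 hr1).congr
    fun _ hp => (wPowSum_eq_piecePowSum hm hr0.ne' hp).symm

theorem stmt_2 (r : ℝ) :
    (0 < r → r < 1 →
      StrictAntiOn
        (fun p : ℝ => ((⌊1 / p⌋₊ : ℝ) * p ^ r + (1 - (⌊1 / p⌋₊ : ℝ) * p) ^ r) ^ (1 / r))
        (Set.Ioc (0 : ℝ) 1)) ∧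
    (1 < r →
      StrictMonoOn
        (fun p : ℝ => ((⌊1 / p⌋₊ : ℝ) * p ^ r + (1 - (⌊1 / p⌋₊ : ℝ) * p) ^ r) ^ (1 / r))
        (Set.Ioc (0 : ℝ) 1)) := by
  refine ⟨fun hr0 hr1 p hp q hq hpq => ?_, fun hr p hp q hq hpq => ?_⟩
  · exact Real.rpow_lt_rpow (wPowSum_nonneg r hq.1) (strictAntiOn_wPowSum hr0 hr1 hp hq hpq)
      (by positivity)
  · exact Real.rpow_lt_rpow (wPowSum_nonneg r hp.1) (strictMonoOn_wPowSum hr hp hq hpq)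
      (one_div_pos.mpr (by linarith))
end

section
/- For n ≥ 2, p ∈ (1/n, 1), and r ∈ (0, ∞), the second derivative of p ↦ (p^r + (n-1)^(1-r)(1-p)^r)^(1/r) equals (r-1)·(n-1)^(1-r)·(p(1-p))^(r-2)·(p^r + (n-1)^(1-r)(1-p)^r)^((1/r)-2). Consequently this function is strictly concave on [1/n,1] when 0 < r < 1 and strictly convex when r > 1. -/
/-!
Write `g = p ^ r + c (1 - p) ^ r` and `h = p ^ (r - 1) - c (1 - p) ^ (r - 1)` (that is,
`h = powSum (-c) (r - 1) p`), so that `g' = r h` and `(g ^ (1 / r))' = g ^ (1 / r - 1) h`.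
Differentiating once more gives
`(r - 1) g ^ (1 / r - 2) (g (p ^ (r - 2) + c (1 - p) ^ (r - 2)) - h ^ 2)`,
and the bracket collapses to `c (p (1 - p)) ^ (r - 2)` because `p + (1 - p) = 1`. So for `c > 0`
the second derivative has the sign of `r - 1` on `(0, 1)`, which gives strict concavity or
convexity on `[0, 1]`.
-/

open Real Set

noncomputable section

/-- With `c = (n - 1) ^ (1 - r)` this is `‖v_n(p)‖_r ^ r`, where
`v_n(p) = (p, (1 - p) / (n - 1), …, (1 - p) / (n - 1))`. -/
def powSum (c r p : ℝ) : ℝ := p ^ r + c * (1 - p) ^ r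

def powNorm (c r p : ℝ) : ℝ := powSum c r p ^ (1 / r)

variable {c r p : ℝ}

lemma powSum_pos (hc : 0 < c) (hp : p ∈ Icc 0 1) : 0 < powSum c r p := by
  obtain ⟨hp0, hp1⟩ := hp
  rcases hp1.lt_or_eq with hp1 | rfl
  · have := rpow_pos_of_pos (sub_pos.2 hp1) r
    have := rpow_nonneg hp0 r
    unfold powSum; positivity
  · have := rpow_nonneg (le_refl (0 : ℝ)) r
    simp only [powSum, one_rpow, sub_self]; positivity

lemma continuous_powNorm (hr : 0 < r) : Continuous (powNorm c r) := by
  unfold powNorm powSum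
  fun_prop (disch := first | exact hr.le | exact Or.inr hr.le | exact one_div_nonneg.2 hr.le)

lemma hasDerivAt_powSum (hp : p ∈ Ioo 0 1) :
    HasDerivAt (powSum c r) (r * powSum (-c) (r - 1) p) p := by
  have h1 : HasDerivAt (fun x => x ^ r) (r * p ^ (r - 1)) p :=
    hasDerivAt_rpow_const (Or.inl hp.1.ne')
  have h2 : HasDerivAt (fun x => (1 - x) ^ r) (-1 * r * (1 - p) ^ (r - 1)) p :=
    ((hasDerivAt_id p).const_sub 1).rpow_const (Or.inl (sub_pos.2 hp.2).ne')
  exact (h1.add (h2.const_mul c)).congr_deriv (by simp only [powSum]; ring)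

lemma powSum_mul_powSum_sub_sq (hp : p ∈ Ioo 0 1) :
    powSum c r p * powSum c (r - 2) p - powSum (-c) (r - 1) p ^ 2
      = c * (p * (1 - p)) ^ (r - 2) := by
  obtain ⟨hp0, hp1⟩ := hp
  have hq0 : 0 < 1 - p := sub_pos.2 hp1
  have hp_r : p ^ r = p ^ (r - 2) * p ^ 2 := by
    rw [← rpow_natCast, ← rpow_add hp0]; norm_num
  have hq_r : (1 - p) ^ r = (1 - p) ^ (r - 2) * (1 - p) ^ 2 := by
    rw [← rpow_natCast, ← rpow_add hq0]; norm_num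
  have hp_r1 : p ^ (r - 1) = p ^ (r - 2) * p := by
    rw [← rpow_add_one hp0.ne']; ring_nf
  have hq_r1 : (1 - p) ^ (r - 1) = (1 - p) ^ (r - 2) * (1 - p) := by
    rw [← rpow_add_one hq0.ne']; ring_nf
  rw [mul_rpow hp0.le hq0.le]
  simp only [powSum, hp_r, hq_r, hp_r1, hq_r1]
  ring

lemma hasDerivAt_powNorm (hc : 0 < c) (hr : r ≠ 0) (hp : p ∈ Ioo 0 1) :
    HasDerivAt (powNorm c r) (powSum c r p ^ (1 / r - 1) * powSum (-c) (r - 1) p) p :=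
  ((hasDerivAt_powSum hp).rpow_const
    (Or.inl (powSum_pos hc (Ioo_subset_Icc_self hp)).ne')).congr_deriv (by field_simp)

lemma hasDerivAt_deriv_powNorm (hc : 0 < c) (hr : r ≠ 0) (hp : p ∈ Ioo 0 1) :
    HasDerivAt (deriv (powNorm c r))
      ((r - 1) * c * (p * (1 - p)) ^ (r - 2) * powSum c r p ^ (1 / r - 2)) p := by
  have hderiv : deriv (powNorm c r) =ᶠ[nhds p]
      fun x => powSum c r x ^ (1 / r - 1) * powSum (-c) (r - 1) x := by
    filter_upwards [isOpen_Ioo.mem_nhds hp] with x hx using (hasDerivAt_powNorm hc hr hx).deriv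
  have hg := powSum_pos (r := r) hc (Ioo_subset_Icc_self hp)
  have hprod := ((hasDerivAt_powSum hp).rpow_const (p := 1 / r - 1) (Or.inl hg.ne')).mul
    (hasDerivAt_powSum (c := -c) (r := r - 1) hp)
  refine (hprod.congr_of_eventuallyEq hderiv).congr_deriv ?_
  have hr' : r * (1 / r - 1) = 1 - r := by field_simp
  rw [neg_neg, show r - 1 - 1 = r - 2 by ring, show 1 / r - 1 - 1 = 1 / r - 2 by ring,
    show 1 / r - 1 = 1 / r - 2 + 1 by ring, rpow_add_one hg.ne']
  linear_combination (powSum (-c) (r - 1) p ^ 2 * powSum c r p ^ (1 / r - 2)) * hr'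
    + (r - 1) * powSum c r p ^ (1 / r - 2) * powSum_mul_powSum_sub_sq (c := c) (r := r) hp

lemma deriv_deriv_powNorm (hc : 0 < c) (hr : r ≠ 0) (hp : p ∈ Ioo 0 1) :
    deriv (deriv (powNorm c r)) p
      = (r - 1) * c * (p * (1 - p)) ^ (r - 2) * powSum c r p ^ (1 / r - 2) :=
  (hasDerivAt_deriv_powNorm hc hr hp).deriv

lemma sign_deriv_deriv_powNorm (hc : 0 < c) (hr : r ≠ 0) (hp : p ∈ Ioo 0 1) :
    SignType.sign (deriv (deriv (powNorm c r)) p) = SignType.sign (r - 1) := by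
  have hpq : 0 < p * (1 - p) := mul_pos hp.1 (sub_pos.2 hp.2)
  have hg := powSum_pos (r := r) hc (Ioo_subset_Icc_self hp)
  rw [deriv_deriv_powNorm hc hr hp, sign_mul, sign_mul, sign_mul, sign_pos hc,
    sign_pos (rpow_pos_of_pos hpq _), sign_pos (rpow_pos_of_pos hg _)]
  simp

lemma strictConcaveOn_powNorm (hc : 0 < c) (hr₀ : 0 < r) (hr₁ : r < 1) :
    StrictConcaveOn ℝ (Icc 0 1) (powNorm c r) :=
  strictConcaveOn_of_deriv2_neg (convex_Icc 0 1) (continuous_powNorm hr₀).continuousOn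
    fun p hp => sign_eq_neg_one_iff.mp <| by
      rw [interior_Icc] at hp
      rw [Function.iterate_succ_apply', Function.iterate_one,
        sign_deriv_deriv_powNorm hc hr₀.ne' hp, sign_neg (sub_neg.2 hr₁)]

lemma strictConvexOn_powNorm (hc : 0 < c) (hr : 1 < r) :
    StrictConvexOn ℝ (Icc 0 1) (powNorm c r) :=
  strictConvexOn_of_deriv2_pos (convex_Icc 0 1) (continuous_powNorm (by linarith)).continuousOn
    fun p hp => sign_eq_one_iff.mp <| by
      rw [interior_Icc] at hp
      rw [Function.iterate_succ_apply', Function.iterate_one,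
        sign_deriv_deriv_powNorm hc (by linarith) hp, sign_pos (sub_pos.2 hr)]

end

theorem stmt_4 (n : ℕ) (hn : 2 ≤ n) (r : ℝ) (hr : 0 < r) :
    (∀ p ∈ Set.Ioo (1 / (n : ℝ)) 1,
      deriv (deriv (fun p : ℝ =>
          (p ^ r + ((n : ℝ) - 1) ^ (1 - r) * (1 - p) ^ r) ^ (1 / r))) p
        = (r - 1) * ((n : ℝ) - 1) ^ (1 - r) * (p * (1 - p)) ^ (r - 2)
            * (p ^ r + ((n : ℝ) - 1) ^ (1 - r) * (1 - p) ^ r) ^ (1 / r - 2)) ∧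
    (r < 1 → StrictConcaveOn ℝ (Set.Icc (1 / (n : ℝ)) 1)
        (fun p : ℝ => (p ^ r + ((n : ℝ) - 1) ^ (1 - r) * (1 - p) ^ r) ^ (1 / r))) ∧
    (1 < r → StrictConvexOn ℝ (Set.Icc (1 / (n : ℝ)) 1)
        (fun p : ℝ => (p ^ r + ((n : ℝ) - 1) ^ (1 - r) * (1 - p) ^ r) ^ (1 / r))) := by
  have hc : 0 < ((n : ℝ) - 1) ^ (1 - r) :=
    rpow_pos_of_pos (by linarith [show (2 : ℝ) ≤ n by exact_mod_cast hn]) _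
  have h0 : (0 : ℝ) ≤ 1 / n := by positivity
  have hsub : Icc (1 / (n : ℝ)) 1 ⊆ Icc 0 1 := Icc_subset_Icc_left h0
  refine ⟨fun p hp => deriv_deriv_powNorm hc hr.ne' (Ioo_subset_Ioo_left h0 hp),
    fun hr₁ => (strictConcaveOn_powNorm hc hr hr₁).subset hsub (convex_Icc _ _),
    fun hr₁ => (strictConvexOn_powNorm hc hr₁).subset hsub (convex_Icc _ _)⟩
end

section
/- For every integer m ≥ 1, p ∈ (1/(m+1), 1/m), and r ∈ (0, ∞), the second derivative of p ↦ (m·p^r + (1 - m·p)^r)^(1/r) equals (r-1)·m·p^(r-2)·(1-mp)^(r-2)·(m·p^r + (1-mp)^r)^((1/r)-2); in particular, this function is strictly concave on (1/(m+1), 1/m) when r < 1 and strictly convex when r > 1. -/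
/-!
Write `q = 1 - m p` and `G = m p^r + q^r`, so that the function is `G^(1/r)`. Differentiating twice,
the second derivative is `m (r - 1) G^(1/r - 2)` times `(p^(r-2) + m q^(r-2)) G - m (p^(r-1) - q^(r-1))^2`,
and this bracket collapses to `(p q)^(r-2) (m p + q)^2 = (p q)^(r-2)`. Hence the second derivative has
the sign of `r - 1` on `(0, 1/m)`, which contains `(1/(m+1), 1/m)`.
-/

open Set Filter Topology

namespace WeightNorm

variable {m r p : ℝ}

/-- `powSum m r p = ‖w(p)‖_r ^ r`, where `w(p)` has `m` atoms of mass `p` and one of mass `1 - m p`. -/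
noncomputable def powSum (m r p : ℝ) : ℝ := m * p ^ r + (1 - m * p) ^ r

noncomputable def norm (m r p : ℝ) : ℝ := powSum m r p ^ (1 / r)

noncomputable def normDeriv (m r p : ℝ) : ℝ :=
  m * (p ^ (r - 1) - (1 - m * p) ^ (r - 1)) * powSum m r p ^ (1 / r - 1)

lemma mem_Ioo_zero_one_div (hm : 0 < m) : p ∈ Ioo 0 (1 / m) ↔ 0 < p ∧ m * p < 1 := by
  rw [mem_Ioo, lt_div_iff₀' hm]

lemma powSum_pos (hm : 0 ≤ m) (hp : 0 < p) (hmp : m * p < 1) : 0 < powSum m r p := by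
  have := Real.rpow_pos_of_pos hp r
  have := Real.rpow_pos_of_pos (sub_pos.2 hmp) r
  unfold powSum
  positivity

lemma hasDerivAt_one_sub_mul_rpow (s : ℝ) (hmp : m * p < 1) :
    HasDerivAt (fun x => (1 - m * x) ^ s) (-(s * m * (1 - m * p) ^ (s - 1))) p :=
  ((((hasDerivAt_id' p).const_mul m).const_sub 1).rpow_const
    (Or.inl (sub_pos.2 hmp).ne')).congr_deriv (by ring)

lemma hasDerivAt_rpow_sub_rpow (s : ℝ) (hp : 0 < p) (hmp : m * p < 1) :
    HasDerivAt (fun x => x ^ s - (1 - m * x) ^ s)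
      (s * (p ^ (s - 1) + m * (1 - m * p) ^ (s - 1))) p :=
  ((Real.hasDerivAt_rpow_const (Or.inl hp.ne')).sub
    (hasDerivAt_one_sub_mul_rpow s hmp)).congr_deriv (by ring)

lemma hasDerivAt_powSum (hp : 0 < p) (hmp : m * p < 1) :
    HasDerivAt (powSum m r) (r * m * (p ^ (r - 1) - (1 - m * p) ^ (r - 1))) p :=
  (((Real.hasDerivAt_rpow_const (Or.inl hp.ne')).const_mul m).add
    (hasDerivAt_one_sub_mul_rpow r hmp)).congr_deriv (by ring)

lemma hasDerivAt_norm (hm : 0 ≤ m) (hp : 0 < p) (hmp : m * p < 1) (hr : r ≠ 0) :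
    HasDerivAt (norm m r) (normDeriv m r p) p := by
  refine ((hasDerivAt_powSum hp hmp).rpow_const (p := 1 / r)
    (Or.inl (powSum_pos hm hp hmp).ne')).congr_deriv ?_
  unfold normDeriv
  field_simp

lemma hasDerivAt_normDeriv (hm : 0 ≤ m) (hp : 0 < p) (hmp : m * p < 1) (hr : r ≠ 0) :
    HasDerivAt (normDeriv m r)
      ((r - 1) * m * p ^ (r - 2) * (1 - m * p) ^ (r - 2) * powSum m r p ^ (1 / r - 2)) p := by
  have hG := powSum_pos (r := r) hm hp hmp
  refine (((hasDerivAt_rpow_sub_rpow (r - 1) hp hmp).const_mul m).mul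
    ((hasDerivAt_powSum hp hmp).rpow_const (p := 1 / r - 1) (Or.inl hG.ne'))).congr_deriv ?_
  have rpow_sub_one {x : ℝ} (hx : 0 < x) (s : ℝ) : x ^ (s - 1) = x ^ (s - 2) * x := by
    rw [← Real.rpow_add_one hx.ne']; ring_nf
  have powSum_eq : powSum m r p
      = m * (p ^ (r - 2) * p ^ 2) + (1 - m * p) ^ (r - 2) * (1 - m * p) ^ 2 := by
    rw [powSum, ← Real.rpow_natCast, ← Real.rpow_natCast, ← Real.rpow_add hp,
      ← Real.rpow_add (sub_pos.2 hmp)]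
    norm_num
  rw [show r - 1 - 1 = r - 2 by ring, show 1 / r - 1 - 1 = 1 / r - 2 by ring, rpow_sub_one hp,
    rpow_sub_one (sub_pos.2 hmp), rpow_sub_one hG]
  generalize powSum m r p ^ (1 / r - 2) = c
  rw [powSum_eq]
  field_simp
  ring

lemma deriv_deriv_norm (hm : 0 ≤ m) (hp : 0 < p) (hmp : m * p < 1) (hr : r ≠ 0) :
    deriv (deriv (norm m r)) p
      = (r - 1) * m * p ^ (r - 2) * (1 - m * p) ^ (r - 2) * powSum m r p ^ (1 / r - 2) := by
  have hnear : ∀ᶠ x in 𝓝 p, 0 < x ∧ m * x < 1 :=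
    (lt_mem_nhds hp).and ((continuous_const_mul m).continuousAt.eventually_lt continuousAt_const hmp)
  have hderiv : deriv (norm m r) =ᶠ[𝓝 p] normDeriv m r :=
    hnear.mono fun x hx => (hasDerivAt_norm hm hx.1 hx.2 hr).deriv
  rw [hderiv.deriv_eq, (hasDerivAt_normDeriv hm hp hmp hr).deriv]

lemma continuousOn_norm (hm : 0 < m) (hr : r ≠ 0) : ContinuousOn (norm m r) (Ioo 0 (1 / m)) :=
  fun _ hp => ((mem_Ioo_zero_one_div hm).1 hp).elim fun hp hmp =>
    (hasDerivAt_norm hm.le hp hmp hr).continuousAt.continuousWithinAt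

lemma exists_pos_iterate_deriv_two_norm_eq (hm : 0 < m) (hr : r ≠ 0) (hp : p ∈ interior (Ioo 0 (1 / m))) :
    ∃ c > 0, deriv^[2] (norm m r) p = (r - 1) * c := by
  rw [interior_Ioo, mem_Ioo_zero_one_div hm] at hp
  have := powSum_pos (r := r) hm.le hp.1 hp.2
  have := Real.rpow_pos_of_pos hp.1 (r - 2)
  have := Real.rpow_pos_of_pos (sub_pos.2 hp.2) (r - 2)
  refine ⟨m * p ^ (r - 2) * (1 - m * p) ^ (r - 2) * powSum m r p ^ (1 / r - 2), by positivity, ?_⟩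
  rw [Function.iterate_succ_apply, Function.iterate_one, deriv_deriv_norm hm.le hp.1 hp.2 hr]
  ring

lemma strictConcaveOn_norm (hm : 0 < m) (hr₀ : 0 < r) (hr₁ : r < 1) :
    StrictConcaveOn ℝ (Ioo 0 (1 / m)) (norm m r) :=
  strictConcaveOn_of_deriv2_neg (convex_Ioo _ _) (continuousOn_norm hm hr₀.ne') fun _ hp => by
    obtain ⟨c, hc, h⟩ := exists_pos_iterate_deriv_two_norm_eq hm hr₀.ne' hp
    rw [h]
    exact mul_neg_of_neg_of_pos (by linarith) hc

lemma strictConvexOn_norm (hm : 0 < m) (hr : 1 < r) :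
    StrictConvexOn ℝ (Ioo 0 (1 / m)) (norm m r) :=
  have hr₀ : r ≠ 0 := (zero_lt_one.trans hr).ne'
  strictConvexOn_of_deriv2_pos (convex_Ioo _ _) (continuousOn_norm hm hr₀) fun _ hp => by
    obtain ⟨c, hc, h⟩ := exists_pos_iterate_deriv_two_norm_eq hm hr₀ hp
    rw [h]
    exact mul_pos (by linarith) hc

end WeightNorm

theorem stmt_5 (m : ℕ) (hm : 1 ≤ m) (r : ℝ) (hr : 0 < r) :
    (∀ p ∈ Set.Ioo (1 / ((m : ℝ) + 1)) (1 / (m : ℝ)),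
      deriv (deriv (fun p : ℝ =>
          ((m : ℝ) * p ^ r + (1 - (m : ℝ) * p) ^ r) ^ (1 / r))) p
        = (r - 1) * (m : ℝ) * p ^ (r - 2) * (1 - (m : ℝ) * p) ^ (r - 2)
            * ((m : ℝ) * p ^ r + (1 - (m : ℝ) * p) ^ r) ^ (1 / r - 2)) ∧
    (r < 1 → StrictConcaveOn ℝ (Set.Ioo (1 / ((m : ℝ) + 1)) (1 / (m : ℝ)))
        (fun p : ℝ => ((m : ℝ) * p ^ r + (1 - (m : ℝ) * p) ^ r) ^ (1 / r))) ∧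
    (1 < r → StrictConvexOn ℝ (Set.Ioo (1 / ((m : ℝ) + 1)) (1 / (m : ℝ)))
        (fun p : ℝ => ((m : ℝ) * p ^ r + (1 - (m : ℝ) * p) ^ r) ^ (1 / r))) := by
  have hm₀ : (0 : ℝ) < m := by exact_mod_cast hm
  have hsub : Ioo (1 / ((m : ℝ) + 1)) (1 / m) ⊆ Ioo 0 (1 / m) :=
    Ioo_subset_Ioo_left (by positivity)
  refine ⟨fun p hp => ?_,
    fun hr₁ => (WeightNorm.strictConcaveOn_norm hm₀ hr hr₁).subset hsub (convex_Ioo _ _),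
    fun hr₁ => (WeightNorm.strictConvexOn_norm hm₀ hr₁).subset hsub (convex_Ioo _ _)⟩
  obtain ⟨hp₀, hmp⟩ := (WeightNorm.mem_Ioo_zero_one_div hm₀).1 (hsub hp)
  exact WeightNorm.deriv_deriv_norm hm₀.le hp₀ hmp hr.ne'
end

section
/- With g(2, z; r, s) = (z^r + 1)·ln_r z − (z^s + 1)·ln_s z, for every z ∈ (1, ∞) and every 1/2 ≤ r < s < ∞, we have g(2, z; r, s) < 0. -/
/-!
Put `Φ t = z ^ t - z ^ (1 - t)`. For `t ≠ 1` one has `(z ^ t + 1) * ln_t z = (Φ t - Φ 1) / (t - 1)`,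
and at `t = 1` the left side is `(z + 1) * log z = Φ' 1`; so `t ↦ (z ^ t + 1) * ln_t z` is the slope
of `Φ` at `1`. Since `Φ' t = log z * (z ^ t + z ^ (1 - t))` increases for `t ≥ 1/2` when `z > 1`,
`Φ` is strictly convex there, and slopes of a strictly convex function at a fixed point increase.
-/

/-- The `q`-logarithm (Tsallis logarithm): `ln_q x = (x^(1-q) - 1)/(1-q)` for `q ≠ 1`,
and `ln_1 x = ln x`. -/
noncomputable def qlog (q x : ℝ) : ℝ :=
  if q = 1 then Real.log x else (x ^ (1 - q) - 1) / (1 - q)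

open Real Set

theorem StrictConvexOn.strictMonoOn_update_slope {S : Set ℝ} {f : ℝ → ℝ} {a f' : ℝ}
    (hf : StrictConvexOn ℝ S f) (ha : a ∈ S) (hf' : HasDerivAt f f' a) :
    StrictMonoOn (Function.update (slope f a) a f') S := by
  intro x hx y hy hxy
  rcases eq_or_ne x a with rfl | hxa
  · simpa [hxy.ne'] using hf.lt_slope_of_hasDerivAt hx hy hxy hf'
  rcases eq_or_ne y a with rfl | hya
  · simpa [hxa, slope_comm] using hf.slope_lt_of_hasDerivAt hx hy hxy hf'
  · simpa [hxa, hya, slope_def_field] using hf.secant_strict_mono ha hx hy hxa hya hxy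

lemma hasDerivAt_rpow_sub_rpow_one_sub {z : ℝ} (hz : 0 < z) (t : ℝ) :
    HasDerivAt (fun t : ℝ => z ^ t - z ^ (1 - t)) (log z * (z ^ t + z ^ (1 - t))) t :=
  (((hasDerivAt_id' t).const_rpow hz).fun_sub
    (((hasDerivAt_id' t).const_sub 1).const_rpow hz)).congr_deriv (by ring)

lemma rpow_add_rpow_one_sub_lt {z a b : ℝ} (hz : 1 < z) (hab : a < b) (h : 1 < a + b) :
    z ^ a + z ^ (1 - a) < z ^ b + z ^ (1 - b) := by
  have hz0 : 0 < z := one_pos.trans hz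
  have hc : z ^ (1 - a - b) < 1 := rpow_lt_one_of_one_lt_of_neg hz (by linarith)
  have hab' : z ^ a < z ^ b := rpow_lt_rpow_of_exponent_lt hz hab
  have ha : z ^ (1 - a) = z ^ (1 - a - b) * z ^ b := by rw [← rpow_add hz0]; ring_nf
  have hb : z ^ (1 - b) = z ^ (1 - a - b) * z ^ a := by rw [← rpow_add hz0]; ring_nf
  rw [ha, hb]
  -- the difference of the two sides is `(1 - z ^ (1 - a - b)) * (z ^ b - z ^ a)`
  nlinarith

lemma strictConvexOn_rpow_sub_rpow_one_sub {z : ℝ} (hz : 1 < z) :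
    StrictConvexOn ℝ (Ici (1 / 2 : ℝ)) (fun t : ℝ => z ^ t - z ^ (1 - t)) := by
  have hz0 : 0 < z := one_pos.trans hz
  have hderiv := fun t => hasDerivAt_rpow_sub_rpow_one_sub hz0 t
  refine StrictMonoOn.strictConvexOn_of_deriv (convex_Ici _)
    (fun t _ => (hderiv t).continuousAt.continuousWithinAt) ?_
  rw [interior_Ici]
  intro a ha b _ hab
  rw [(hderiv a).deriv, (hderiv b).deriv]
  exact mul_lt_mul_of_pos_left (rpow_add_rpow_one_sub_lt hz hab (by linarith [mem_Ioi.mp ha]))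
    (log_pos hz)

lemma rpow_add_one_mul_qlog {z : ℝ} (hz : 0 < z) (t : ℝ) :
    (z ^ t + 1) * qlog t z =
      Function.update (slope (fun t : ℝ => z ^ t - z ^ (1 - t)) 1) 1 ((z + 1) * log z) t := by
  rcases eq_or_ne t 1 with rfl | ht
  · simp [qlog]
  have hzz : z ^ t * z ^ (1 - t) = z := by rw [← rpow_add hz]; norm_num
  have h1t : 1 - t ≠ 0 := sub_ne_zero.mpr ht.symm
  have ht1 : t - 1 ≠ 0 := sub_ne_zero.mpr ht
  simp only [qlog, if_neg ht, Function.update_of_ne ht, slope_def_field, sub_self, rpow_zero,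
    rpow_one]
  field_simp
  linear_combination (t - 1) * hzz

theorem stmt_7 (z r s : ℝ) (hz : 1 < z) (hr : 1 / 2 ≤ r) (hrs : r < s) :
    (z ^ r + 1) * qlog r z - (z ^ s + 1) * qlog s z < 0 := by
  have hz0 : 0 < z := one_pos.trans hz
  have hderiv_one : HasDerivAt (fun t : ℝ => z ^ t - z ^ (1 - t)) ((z + 1) * log z) 1 := by
    convert hasDerivAt_rpow_sub_rpow_one_sub hz0 1 using 1
    simp [mul_comm]
  rw [sub_neg, rpow_add_one_mul_qlog hz0, rpow_add_one_mul_qlog hz0]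
  exact (strictConvexOn_rpow_sub_rpow_one_sub hz).strictMonoOn_update_slope (by norm_num)
    hderiv_one hr (hr.trans hrs.le) hrs
end

section
/- For n ≥ 1 and μ ∈ [0, ln n], the value p = (n(n-1) − (n-2)e^μ + 2√(e^μ(n-1)(n − e^μ)))/n² lies in [1/n, 1] and satisfies (√p + √(n-1)·√(1-p))² = e^μ; that is, it is the inverse of the Rényi entropy of order 1/2 of v_n(p). -/
set_option maxHeartbeats 1000000 in
theorem stmt_10 (n : ℕ) (hn : 1 ≤ n) (μ : ℝ) (hμ0 : 0 ≤ μ) (hμ : μ ≤ Real.log n)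
    (p : ℝ)
    (hp : p = ((n : ℝ) * ((n : ℝ) - 1) - ((n : ℝ) - 2) * Real.exp μ
        + 2 * Real.sqrt (Real.exp μ * ((n : ℝ) - 1) * ((n : ℝ) - Real.exp μ))) / (n : ℝ) ^ 2) :
    p ∈ Set.Icc (1 / (n : ℝ)) 1 ∧
    (Real.sqrt p + Real.sqrt ((n : ℝ) - 1) * Real.sqrt (1 - p)) ^ 2 = Real.exp μ := by
  have hn0 : (0:ℝ) < n := by exact_mod_cast hn
  set E := Real.exp μ with hEdef
  have hE1 : 1 ≤ E := Real.one_le_exp hμ0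
  have hEn : E ≤ n := by
    calc E ≤ Real.exp (Real.log n) := Real.exp_le_exp.mpr hμ
    _ = n := Real.exp_log hn0
  have h1 : (0:ℝ) ≤ (n:ℝ) - 1 := by linarith
  have h2 : (0:ℝ) ≤ (n:ℝ) - E := by linarith
  have hE0 : (0:ℝ) ≤ E := by linarith
  set a := Real.sqrt E with hadef
  set b := Real.sqrt ((n:ℝ) - 1) with hbdef
  set c := Real.sqrt ((n:ℝ) - E) with hcdef
  have ha2 : a ^ 2 = E := Real.sq_sqrt hE0
  have hb2 : b ^ 2 = (n:ℝ) - 1 := Real.sq_sqrt h1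
  have hc2 : c ^ 2 = (n:ℝ) - E := Real.sq_sqrt h2
  have ha0 : 0 ≤ a := Real.sqrt_nonneg _
  have hb0 : 0 ≤ b := Real.sqrt_nonneg _
  have hc0 : 0 ≤ c := Real.sqrt_nonneg _
  have habc : 0 ≤ a * b * c := by positivity
  have hS : Real.sqrt (E * ((n:ℝ) - 1) * ((n:ℝ) - E)) = a * b * c := by
    rw [Real.sqrt_mul (by positivity), Real.sqrt_mul hE0]
  rw [hS] at hp
  have hpform : p = ((a + b * c) / n) ^ 2 := by
    rw [hp, div_pow]
    congr 1
    linear_combination (-1 : ℝ) * ha2 - c ^ 2 * hb2 - ((n:ℝ) - 1) * hc2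
  have key2 : (n:ℝ) ^ 2 - (a + b * c) ^ 2 = (b * a - c) ^ 2 := by
    linear_combination (-(1 + b ^ 2)) * ha2 + (-(n:ℝ)) * hb2 + (-(1 + b ^ 2)) * hc2
  have h1pform : 1 - p = ((b * a - c) / n) ^ 2 := by
    rw [hpform, div_pow, div_pow, eq_div_iff (by positivity : ((n:ℝ) ^ 2) ≠ 0),
      sub_mul, one_mul, div_mul_cancel₀ _ (by positivity : ((n:ℝ) ^ 2) ≠ 0)]
    linarith [key2]
  have hbac : c ≤ b * a := by
    have hle : (n:ℝ) - E ≤ ((n:ℝ) - 1) * E := by nlinarith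
    calc c = Real.sqrt ((n:ℝ) - E) := rfl
    _ ≤ Real.sqrt (((n:ℝ) - 1) * E) := Real.sqrt_le_sqrt hle
    _ = b * a := Real.sqrt_mul h1 E
  have hsp : Real.sqrt p = (a + b * c) / n := by
    rw [hpform, Real.sqrt_sq (by positivity)]
  have hs1p : Real.sqrt (1 - p) = (b * a - c) / n := by
    rw [h1pform, Real.sqrt_sq (div_nonneg (by linarith) hn0.le)]
  refine ⟨⟨?_, ?_⟩, ?_⟩
  · rw [hp, div_le_div_iff₀ hn0 (by positivity)]
    have hnum : (n:ℝ) ≤ (n:ℝ) * ((n:ℝ) - 1) - ((n:ℝ) - 2) * E + 2 * (a * b * c) := by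
      rcases eq_or_lt_of_le hn with h | h
      · have hn1 : (n:ℝ) = 1 := by exact_mod_cast h.symm
        have hE1' : E = 1 := le_antisymm (by linarith [hn1 ▸ hEn]) hE1
        rw [hn1, hE1']
        linarith
      · have h2n : (2:ℝ) ≤ n := by exact_mod_cast h
        nlinarith [mul_nonneg (by linarith : (0:ℝ) ≤ (n:ℝ) - 2) h2]
    nlinarith [mul_le_mul_of_nonneg_right hnum hn0.le]
  · have := sq_nonneg ((b * a - c) / (n:ℝ))
    linarith [h1pform]
  · rw [hsp, hs1p]
    have key : (a + b * c) / n + b * ((b * a - c) / n) = a := by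
      field_simp
      linear_combination a * hb2
    rw [key, ha2]
end

section
/- For n ≥ 1 and μ ∈ [0, ln n], the value p = (1 + √(e^{-μ}(n-1)(n − e^μ)))/n lies in [1/n, 1] and satisfies p² + (1-p)²/(n-1) = e^{-μ}; that is, it inverts the collision (order-2 Rényi) entropy of v_n(p). -/
/-!
Put `c = e^{-μ}`, so that the radicand equals `(n - 1)(n c - 1)` and `μ ∈ [0, ln n]` means
`c ∈ [1/n, 1]`. Clearing denominators, `p = (1 + s)/n` satisfies `p² + (1 - p)²/(n - 1) = c` exactly
when `s² = (n - 1)(n c - 1)`, and `0 ≤ s ≤ n - 1` puts `p` in `[1/n, 1]`.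
-/

open Real Set

/-- The inverse of `p ↦ p² + (1 - p)²/(N - 1)` on `[1/N, 1]`. -/
noncomputable def collisionInv (N c : ℝ) : ℝ := (1 + √((N - 1) * (N * c - 1))) / N

lemma collisionInv_mem_Icc {N c : ℝ} (hN : 1 ≤ N) (hc : c ≤ 1) :
    collisionInv N c ∈ Icc (1 / N) 1 := by
  have hN0 : 0 < N := by linarith
  have hs : √((N - 1) * (N * c - 1)) ≤ N - 1 := by
    rw [sqrt_le_left (by linarith), sq]
    exact mul_le_mul_of_nonneg_left (by nlinarith) (by linarith)
  constructor
  · exact div_le_div_of_nonneg_right (by linarith [sqrt_nonneg ((N - 1) * (N * c - 1))]) hN0.le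
  · rw [collisionInv, div_le_one hN0]
    linarith

lemma sq_add_one_sub_sq_div_eq {N c s : ℝ} (hN : N ≠ 0) (hN1 : N - 1 ≠ 0)
    (hs : s ^ 2 = (N - 1) * (N * c - 1)) :
    ((1 + s) / N) ^ 2 + (1 - (1 + s) / N) ^ 2 / (N - 1) = c := by
  field_simp
  linear_combination N * hs

lemma collisionInv_sq_add_one_sub_sq_div {N c : ℝ} (hN : 1 ≤ N) (hc : 1 / N ≤ c) (hc1 : c ≤ 1) :
    collisionInv N c ^ 2 + (1 - collisionInv N c) ^ 2 / (N - 1) = c := by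
  rcases hN.eq_or_lt with rfl | hN
  · -- At `N = 1` the division by `N - 1 = 0` returns `0`, and `c` is pinned to `1`.
    norm_num [collisionInv] at hc ⊢
    linarith
  · have hN0 : 0 < N := by linarith
    have hNc : 1 ≤ N * c := by rwa [div_le_iff₀' hN0] at hc
    refine sq_add_one_sub_sq_div_eq hN0.ne' (by linarith) (sq_sqrt ?_)
    nlinarith

theorem stmt_11 (n : ℕ) (hn : 1 ≤ n) (μ : ℝ) (hμ0 : 0 ≤ μ) (hμ : μ ≤ Real.log n)
    (p : ℝ)
    (hp : p = (1 + Real.sqrt (Real.exp (-μ) * ((n : ℝ) - 1) * ((n : ℝ) - Real.exp μ))) / (n : ℝ)) :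
    p ∈ Set.Icc (1 / (n : ℝ)) 1 ∧
    p ^ 2 + (1 - p) ^ 2 / ((n : ℝ) - 1) = Real.exp (-μ) := by
  have hN : (1 : ℝ) ≤ n := by exact_mod_cast hn
  have hc1 : exp (-μ) ≤ 1 := exp_le_one_iff.mpr (by linarith)
  have hc : 1 / (n : ℝ) ≤ exp (-μ) := by
    rw [one_div, ← exp_log (by linarith : (0 : ℝ) < n), ← exp_neg]
    exact exp_le_exp.mpr (neg_le_neg hμ)
  have hp' : p = collisionInv n (exp (-μ)) := by
    have hinv : exp (-μ) * exp μ = 1 := by rw [← exp_add, neg_add_cancel, exp_zero]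
    rw [hp, collisionInv]
    congr 3
    linear_combination (1 - (n : ℝ)) * hinv
  subst hp'
  exact ⟨collisionInv_mem_Icc hN hc1, collisionInv_sq_add_one_sub_sq_div hN hc hc1⟩
end

section
/- For μ ∈ [0, ∞) with m = ⌊e^μ⌋, the value p = (m + √(e^{-μ}·m·(1 + m − e^μ)))/(m(1+m)) lies in (0, 1] and satisfies m·p² + (1 − m·p)² = e^{-μ}, with ⌊1/p⌋ = m; i.e., it inverts the order-2 Rényi entropy of w(p). -/
/-! With `x = e^μ`, the value `p` is the larger root of the quadratic
`m (1 + m) p² - 2 m p + 1 = x⁻¹`, whose discriminant is `4 s²` with `s² = x⁻¹ m (1 + m - x)`.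
Since `m ≤ x < m + 1` we get `0 < s ≤ 1`, which is exactly `1 / (m + 1) < p ≤ 1 / m`,
i.e. `⌊1 / p⌋ = m`. -/

section RenyiInverse

variable {m x s p : ℝ}

theorem mul_sq_add_one_sub_mul_sq_eq_inv (hm : 0 < m) (hx : x ≠ 0)
    (hs : s ^ 2 = x⁻¹ * m * (1 + m - x)) (hp : p = (m + s) / (m * (1 + m))) :
    m * p ^ 2 + (1 - m * p) ^ 2 = x⁻¹ := by
  have hq : m * p ^ 2 + (1 - m * p) ^ 2 = (s ^ 2 + m) / (m * (1 + m)) := by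
    subst hp; field_simp; ring
  rw [hq, hs]
  field_simp
  ring

theorem one_div_add_one_lt_of_pos (hm : 0 < m) (hs : 0 < s)
    (hp : p = (m + s) / (m * (1 + m))) : 1 / (m + 1) < p := by
  rw [hp, div_lt_div_iff₀ (by linarith) (by positivity)]
  nlinarith

theorem le_one_div_of_le_one (hm : 0 < m) (hs : s ≤ 1)
    (hp : p = (m + s) / (m * (1 + m))) : p ≤ 1 / m := by
  rw [hp, div_le_div_iff₀ (by positivity) hm]
  nlinarith

theorem discr_mem_Ioc (hm : 0 < m) (hmx : m ≤ x) (hxm : x < m + 1) :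
    x⁻¹ * m * (1 + m - x) ∈ Set.Ioc 0 1 := by
  have hx : 0 < x := hm.trans_le hmx
  have hd : 0 < 1 + m - x := by linarith
  refine ⟨by positivity, ?_⟩
  rw [mul_assoc, inv_mul_le_one₀ hx]
  nlinarith

end RenyiInverse

theorem Nat.floor_one_div_eq {m : ℕ} {p : ℝ} (h₁ : 1 / (m + 1 : ℝ) < p) (h₂ : p ≤ 1 / m) :
    ⌊1 / p⌋₊ = m := by
  have hp : 0 < p := lt_trans (by positivity) h₁
  rw [Nat.floor_eq_iff (by positivity), one_div_lt hp (by positivity)]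
  refine ⟨?_, h₁⟩
  rcases (Nat.cast_nonneg m : (0 : ℝ) ≤ m).eq_or_lt with h | h
  · rw [← h]; positivity
  · exact (le_one_div h hp).2 h₂

theorem stmt_12 (μ : ℝ) (hμ0 : 0 ≤ μ) (m : ℕ) (hm : m = ⌊Real.exp μ⌋₊ ) (p : ℝ)
    (hp : p = ((m : ℝ) + Real.sqrt (Real.exp (-μ) * (m : ℝ) * (1 + (m : ℝ) - Real.exp μ)))
        / ((m : ℝ) * (1 + (m : ℝ)))) :
    p ∈ Set.Ioc (0 : ℝ) 1 ∧
    (m : ℝ) * p ^ 2 + (1 - (m : ℝ) * p) ^ 2 = Real.exp (-μ) ∧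
    ⌊1 / p⌋₊ = m := by
  rw [Real.exp_neg] at hp ⊢
  have hx : 1 ≤ Real.exp μ := Real.one_le_exp hμ0
  have hm1 : (1 : ℝ) ≤ m := by
    rw [hm]; exact_mod_cast Nat.le_floor (by simpa using hx)
  have hmx : (m : ℝ) ≤ Real.exp μ := hm ▸ Nat.floor_le (by positivity)
  have hxm : Real.exp μ < m + 1 := hm ▸ Nat.lt_floor_add_one _
  obtain ⟨hd0, hd1⟩ := discr_mem_Ioc (by positivity) hmx hxm
  have hlo := one_div_add_one_lt_of_pos (by positivity) (Real.sqrt_pos.2 hd0) hp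
  have hhi := le_one_div_of_le_one (by positivity) (Real.sqrt_le_one.2 hd1) hp
  refine ⟨⟨lt_trans (by positivity) hlo, hhi.trans (div_le_one_of_le₀ hm1 (by positivity))⟩,
    mul_sq_add_one_sub_mul_sq_eq_inv (by positivity) (by positivity) (Real.sq_sqrt hd0.le) hp,
    Nat.floor_one_div_eq hlo hhi⟩
end

section
/- Let P be a probability distribution on a finite set of size n ≥ 2 and 0 < r < 1. Then there exists p ∈ [1/n, 1] with ‖v_n(p)‖_r = ‖P‖_r, and for this p: ‖v_n(p)‖_s ≤ ‖P‖_s for all s ∈ (r, 1), and ‖v_n(p)‖_s ≥ ‖P‖_s for all s ∈ (0, r) ∪ (1, ∞]. -/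
/-!
Choose `p` between `max P` and `1` by the intermediate value theorem: at `p = max P` the power-mean
inequality on the other `n - 1` masses gives `‖v_n(p)‖_r^r ≥ ∑ P^r`, while at `p = 1` the left side
is `1 < ∑ P^r`.

With `t = (1 - p) / ((n - 1) p)` one has `‖v_n(p)‖_s^s - ∑ P^s = p^s Φ(s)`, where
`Φ(s) = 1 + (n - 1) t^s - ∑ (P i / p)^s` vanishes at `s = 0, r, 1`. Its derivative is `t^s H(s)`
with `H` convex, because `P i / p ≤ 1` makes every weight `-log (P i / p)` nonnegative. Rolle puts
zeros of `H` in `(0, r)` and `(r, 1)`, convexity then fixes the sign of `H` between and outside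
them, so `Φ` increases, decreases, increases: `Φ ≥ 0` on `[0, r]`, `Φ ≤ 0` on `[r, 1]`, `Φ ≥ 0`
on `[1, ∞)`.
-/

open Finset Real Set

/-- `∑ₓ v_n(p)(x)^s`: the `n - 1` masses `(1 - p)/(n - 1)` contribute `(n - 1)^(1 - s) (1 - p)^s`.
Its `1/s`-th power is `‖v_n(p)‖_s`. -/
noncomputable def vnPowSum (n : ℕ) (p s : ℝ) : ℝ :=
  p ^ s + ((n : ℝ) - 1) ^ (1 - s) * (1 - p) ^ s

theorem ConvexOn.finset_sum {𝕜 E β ι : Type*} [Semiring 𝕜] [PartialOrder 𝕜] [AddCommMonoid E]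
    [AddCommMonoid β] [PartialOrder β] [IsOrderedAddMonoid β] [SMul 𝕜 E] [Module 𝕜 β]
    {s : Set E} (hs : Convex 𝕜 s) {t : Finset ι} {f : ι → E → β}
    (hf : ∀ i ∈ t, ConvexOn 𝕜 s (f i)) : ConvexOn 𝕜 s fun x => ∑ i ∈ t, f i x := by
  have h : (fun x => ∑ i ∈ t, f i x) = ∑ i ∈ t, f i := by
    ext x; rw [Finset.sum_apply]
  rw [h]
  exact Finset.sum_induction _ (ConvexOn 𝕜 s) (fun _ _ => ConvexOn.add) (convexOn_const 0 hs) hf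

theorem Real.sum_rpow_le_card_rpow_mul_rpow_sum {ι : Type*} {s : Finset ι} {x : ι → ℝ}
    (hx : ∀ i ∈ s, 0 ≤ x i) {r : ℝ} (hr0 : 0 < r) (hr1 : r ≤ 1) :
    ∑ i ∈ s, x i ^ r ≤ (#s : ℝ) ^ (1 - r) * (∑ i ∈ s, x i) ^ r := by
  have h := rpow_sum_le_const_mul_sum_rpow_of_nonneg s ((one_le_inv₀ hr0).2 hr1)
    fun i hi => rpow_nonneg (hx i hi) r
  rw [sum_congr rfl fun i hi => rpow_rpow_inv (hx i hi) hr0.ne'] at h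
  have hsum : 0 ≤ ∑ i ∈ s, x i ^ r := sum_nonneg fun i hi => rpow_nonneg (hx i hi) r
  calc ∑ i ∈ s, x i ^ r = ((∑ i ∈ s, x i ^ r) ^ r⁻¹) ^ r := (rpow_inv_rpow hsum hr0.ne').symm
    _ ≤ ((#s : ℝ) ^ (r⁻¹ - 1) * ∑ i ∈ s, x i) ^ r := rpow_le_rpow (rpow_nonneg hsum _) h hr0.le
    _ = (#s : ℝ) ^ (1 - r) * (∑ i ∈ s, x i) ^ r := by
        rw [mul_rpow (by positivity) (sum_nonneg hx), ← rpow_mul (Nat.cast_nonneg _),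
          sub_mul, inv_mul_cancel₀ hr0.ne', one_mul]

section SignPattern

variable {Φ H w : ℝ → ℝ}

theorem monotoneOn_of_hasDerivAt_mul_pos {D : Set ℝ} (hD : Convex ℝ D)
    (hΦ : ∀ s, HasDerivAt Φ (H s * w s) s) (hw : ∀ s, 0 < w s) (hH : ∀ s ∈ D, 0 ≤ H s) :
    MonotoneOn Φ D :=
  monotoneOn_of_hasDerivWithinAt_nonneg hD (fun s _ => (hΦ s).continuousAt.continuousWithinAt)
    (fun s _ => (hΦ s).hasDerivWithinAt)
    fun s hs => mul_nonneg (hH s (interior_subset hs)) (hw s).le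

theorem antitoneOn_of_hasDerivAt_mul_pos {D : Set ℝ} (hD : Convex ℝ D)
    (hΦ : ∀ s, HasDerivAt Φ (H s * w s) s) (hw : ∀ s, 0 < w s) (hH : ∀ s ∈ D, H s ≤ 0) :
    AntitoneOn Φ D :=
  antitoneOn_of_hasDerivWithinAt_nonpos hD (fun s _ => (hΦ s).continuousAt.continuousWithinAt)
    (fun s _ => (hΦ s).hasDerivWithinAt)
    fun s hs => mul_nonpos_of_nonpos_of_nonneg (hH s (interior_subset hs)) (hw s).le

theorem sign_pattern_of_hasDerivAt_mul_pos_of_convexOn (hΦ : ∀ s, HasDerivAt Φ (H s * w s) s)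
    (hw : ∀ s, 0 < w s) (hH : ConvexOn ℝ univ H) {a b c : ℝ} (hab : a < b) (hbc : b < c)
    (ha : Φ a = 0) (hb : Φ b = 0) (hc : Φ c = 0) :
    (∀ s ∈ Icc a b, 0 ≤ Φ s) ∧ (∀ s ∈ Icc b c, Φ s ≤ 0) ∧ ∀ s, c ≤ s → 0 ≤ Φ s := by
  have hΦc : Continuous Φ := continuous_iff_continuousAt.2 fun s => (hΦ s).continuousAt
  have rolle : ∀ {x y}, x < y → Φ x = 0 → Φ y = 0 → ∃ z ∈ Ioo x y, H z = 0 := by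
    intro x y hxy hx hy
    obtain ⟨z, hz, hz'⟩ :=
      exists_hasDerivAt_eq_zero hxy hΦc.continuousOn (hx.trans hy.symm) fun s _ => hΦ s
    exact ⟨z, hz, (mul_eq_zero.1 hz').resolve_right (hw z).ne'⟩
  obtain ⟨s₁, ⟨has₁, hs₁b⟩, hH₁⟩ := rolle hab ha hb
  obtain ⟨s₂, ⟨hbs₂, hs₂c⟩, hH₂⟩ := rolle hbc hb hc
  have hs₁₂ : s₁ < s₂ := hs₁b.trans hbs₂
  have up₁ : MonotoneOn Φ (Iic s₁) := monotoneOn_of_hasDerivAt_mul_pos (convex_Iic _) hΦ hw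
    fun s hs => hH₁ ▸ hH.le_left_of_right_le'' trivial trivial hs hs₁₂ (by rw [hH₁, hH₂])
  have down : AntitoneOn Φ (Icc s₁ s₂) := antitoneOn_of_hasDerivAt_mul_pos (convex_Icc _ _) hΦ hw
    fun s hs => (hH.le_on_segment trivial trivial (by rwa [segment_eq_Icc hs₁₂.le])).trans
      (by rw [hH₁, hH₂, max_self])
  have up₂ : MonotoneOn Φ (Ici s₂) := monotoneOn_of_hasDerivAt_mul_pos (convex_Ici _) hΦ hw
    fun s hs => hH₂ ▸ hH.le_right_of_left_le'' trivial trivial hs₁₂ hs (by rw [hH₁, hH₂])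
  refine ⟨fun s ⟨has, hsb⟩ => ?_, fun s ⟨hbs, hsc⟩ => ?_, fun s hcs => ?_⟩
  · rcases le_total s s₁ with h | h
    · exact ha ▸ up₁ has₁.le h has
    · exact hb ▸ down ⟨h, hsb.trans hbs₂.le⟩ ⟨hs₁b.le, hbs₂.le⟩ hsb
  · rcases le_total s s₂ with h | h
    · exact hb ▸ down ⟨hs₁b.le, hbs₂.le⟩ ⟨hs₁b.le.trans hbs, h⟩ hbs
    · exact hc ▸ up₂ h hs₂c.le hsc
  · exact hc ▸ up₂ hs₂c.le (hs₂c.le.trans hcs) hcs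

end SignPattern

section Gap

variable {ι : Type*} [Fintype ι] {b : ι → ℝ} {t : ℝ}

theorem hasDerivAt_one_add_mul_rpow_sub_sum_rpow (hb : ∀ i, 0 < b i) (ht : 0 < t) (c s : ℝ) :
    HasDerivAt (fun s => 1 + c * t ^ s - ∑ i, b i ^ s)
      ((c * log t + ∑ i, -log (b i) * (b i / t) ^ s) * t ^ s) s := by
  have hsum : HasDerivAt (fun s => ∑ i, b i ^ s) (∑ i, b i ^ s * log (b i)) s :=
    HasDerivAt.fun_sum fun i _ => (hasStrictDerivAt_const_rpow (hb i) s).hasDerivAt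
  refine ((((hasStrictDerivAt_const_rpow ht s).hasDerivAt.const_mul c).const_add 1).fun_sub
    hsum).congr_deriv ?_
  simp only [add_mul, Finset.sum_mul, div_rpow (hb _).le ht.le]
  field_simp
  simp only [Finset.sum_neg_distrib, mul_comm (log _)]
  ring

theorem convexOn_mul_log_add_sum_neg_log_mul_rpow (hb0 : ∀ i, 0 < b i) (hb1 : ∀ i, b i ≤ 1)
    (ht : 0 < t) (c : ℝ) :
    ConvexOn ℝ univ fun s : ℝ => c * log t + ∑ i, -log (b i) * (b i / t) ^ s := by
  refine (convexOn_const (c * log t) convex_univ).add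
    (ConvexOn.finset_sum convex_univ fun i _ => ?_)
  exact (convexOn_rpow_left (div_pos (hb0 i) ht)).smul
    (neg_nonneg.2 (log_nonpos (hb0 i).le (hb1 i)))

end Gap

section VnPowSum

variable {ι : Type*} [Fintype ι] {P : ι → ℝ} {n : ℕ} {p r : ℝ}

theorem vnPowSum_one (hr : r ≠ 0) : vnPowSum n 1 r = 1 := by
  simp [vnPowSum, zero_rpow hr]

theorem continuous_vnPowSum (hr : 0 ≤ r) : Continuous fun p => vnPowSum n p r :=
  (continuous_rpow_const hr).add
    (continuous_const.mul ((continuous_rpow_const hr).comp (continuous_const.sub continuous_id)))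

theorem vnPowSum_nonneg (hn : 1 ≤ n) (hp0 : 0 ≤ p) (hp1 : p ≤ 1) (s : ℝ) : 0 ≤ vnPowSum n p s := by
  have hn' : (0 : ℝ) ≤ n - 1 := sub_nonneg.2 (by exact_mod_cast hn)
  have := rpow_nonneg hn' (1 - s)
  have := rpow_nonneg (sub_nonneg.2 hp1) s
  unfold vnPowSum
  positivity

theorem sum_rpow_le_vnPowSum (hP : ∀ i, 0 ≤ P i) (hsum : ∑ i, P i = 1) (i₀ : ι) (hr0 : 0 < r)
    (hr1 : r ≤ 1) : ∑ i, P i ^ r ≤ vnPowSum (Fintype.card ι) (P i₀) r := by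
  classical
  have hcard : ((univ.erase i₀).card : ℝ) = Fintype.card ι - 1 := by
    rw [card_erase_of_mem (mem_univ _), card_univ, Nat.cast_pred (Fintype.card_pos_iff.2 ⟨i₀⟩)]
  have hrest : ∑ i ∈ univ.erase i₀, P i = 1 - P i₀ := by
    rw [← hsum, ← add_sum_erase _ _ (mem_univ i₀), add_sub_cancel_left]
  rw [← add_sum_erase _ _ (mem_univ i₀), vnPowSum, ← hcard, ← hrest]
  gcongr
  exact Real.sum_rpow_le_card_rpow_mul_rpow_sum (fun i _ => hP i) hr0 hr1

theorem one_lt_sum_rpow [Nontrivial ι] (hP : ∀ i, 0 < P i) (hsum : ∑ i, P i = 1) (hr1 : r < 1) :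
    1 < ∑ i, P i ^ r := by
  have hP1 : ∀ i, P i < 1 := fun i => by
    obtain ⟨j, hj⟩ := exists_ne i
    exact hsum ▸ single_lt_sum hj (mem_univ i) (mem_univ j) (hP j) fun k _ _ => (hP k).le
  calc 1 = ∑ i, P i := hsum.symm
    _ < ∑ i, P i ^ r := sum_lt_sum_of_nonempty univ_nonempty fun i _ => by
        simpa using rpow_lt_rpow_of_exponent_gt (hP i) (hP1 i) hr1

theorem exists_vnPowSum_eq [Nontrivial ι] (hP : ∀ i, 0 < P i) (hsum : ∑ i, P i = 1) (i₀ : ι)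
    (hr0 : 0 < r) (hr1 : r < 1) :
    ∃ p ∈ Ico (P i₀) 1, vnPowSum (Fintype.card ι) p r = ∑ i, P i ^ r := by
  have hlt := one_lt_sum_rpow hP hsum hr1
  have hP₀ : P i₀ ≤ 1 := hsum ▸ single_le_sum (fun i _ => (hP i).le) (mem_univ i₀)
  obtain ⟨p, ⟨hMp, hp1⟩, hp⟩ :=
    intermediate_value_Icc' hP₀ (continuous_vnPowSum hr0.le).continuousOn
      ⟨(vnPowSum_one hr0.ne').trans_le hlt.le,
        sum_rpow_le_vnPowSum (fun i => (hP i).le) hsum i₀ hr0 hr1.le⟩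
  refine ⟨p, ⟨hMp, hp1.lt_of_ne ?_⟩, hp⟩
  rintro rfl
  exact hlt.ne' (hp.symm.trans (vnPowSum_one hr0.ne'))

theorem vnPowSum_sub_sum_rpow (hn : 1 < n) (hP : ∀ i, 0 ≤ P i) (hp0 : 0 < p) (hp1 : p ≤ 1)
    (s : ℝ) : vnPowSum n p s - ∑ i, P i ^ s =
      p ^ s * (1 + (n - 1) * ((1 - p) / ((n - 1) * p)) ^ s - ∑ i, (P i / p) ^ s) := by
  have hn1 : (0 : ℝ) < n - 1 := sub_pos.2 (by exact_mod_cast hn)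
  set t := (1 - p) / ((n - 1) * p) with ht
  have hsplit : (1 - p) ^ s = (n - 1) ^ s * (p ^ s * t ^ s) := by
    rw [← mul_rpow hp0.le (by positivity), ← mul_rpow hn1.le (by positivity)]
    congr 1
    rw [ht]
    field_simp
  have hpow : ((n : ℝ) - 1) ^ (1 - s) * (n - 1) ^ s = n - 1 := by
    rw [← rpow_add hn1]; simp
  simp_rw [vnPowSum, hsplit, div_rpow (hP _) hp0.le]
  rw [← mul_assoc, hpow, mul_sub, mul_sum]
  simp_rw [mul_div_cancel₀ _ (rpow_pos_of_pos hp0 s).ne']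
  ring

theorem vnPowSum_sign_pattern [Nontrivial ι] (hP : ∀ i, 0 < P i) (hsum : ∑ i, P i = 1)
    (hPp : ∀ i, P i ≤ p) (hp1 : p < 1) (hr0 : 0 < r) (hr1 : r < 1)
    (hpr : vnPowSum (Fintype.card ι) p r = ∑ i, P i ^ r) :
    (∀ s ∈ Icc 0 r, ∑ i, P i ^ s ≤ vnPowSum (Fintype.card ι) p s) ∧
      (∀ s ∈ Icc r 1, vnPowSum (Fintype.card ι) p s ≤ ∑ i, P i ^ s) ∧
      ∀ s, 1 ≤ s → ∑ i, P i ^ s ≤ vnPowSum (Fintype.card ι) p s := by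
  have hN : 1 < Fintype.card ι := Fintype.one_lt_card
  have hN' : (0 : ℝ) < Fintype.card ι - 1 := sub_pos.2 (by exact_mod_cast hN)
  have hp0 : 0 < p := (hP (Classical.arbitrary ι)).trans_le (hPp _)
  have ht : 0 < (1 - p) / ((Fintype.card ι - 1) * p) := by
    have := sub_pos.2 hp1
    positivity
  have hb0 : ∀ i, 0 < P i / p := fun i => div_pos (hP i) hp0
  have hgap := vnPowSum_sub_sum_rpow hN (fun i => (hP i).le) hp0 hp1.le
  obtain ⟨hlow, hmid, hhigh⟩ := sign_pattern_of_hasDerivAt_mul_pos_of_convexOn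
    (hasDerivAt_one_add_mul_rpow_sub_sum_rpow hb0 ht _) (fun s => rpow_pos_of_pos ht s)
    (convexOn_mul_log_add_sum_neg_log_mul_rpow hb0 (fun i => (div_le_one hp0).2 (hPp i)) ht _)
    hr0 hr1 (by simp) ((mul_eq_zero.1 ((hgap r).symm.trans (sub_eq_zero.2 hpr))).resolve_left
      (rpow_pos_of_pos hp0 r).ne')
    (by simp only [rpow_one, ← sum_div, hsum]; field_simp; ring)
  refine ⟨fun s hs => sub_nonneg.1 ?_, fun s hs => sub_nonpos.1 ?_, fun s hs => sub_nonneg.1 ?_⟩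
  all_goals rw [hgap]
  · exact mul_nonneg (rpow_nonneg hp0.le s) (hlow s hs)
  · exact mul_nonpos_of_nonneg_of_nonpos (rpow_nonneg hp0.le s) (hmid s hs)
  · exact mul_nonneg (rpow_nonneg hp0.le s) (hhigh s hs)

end VnPowSum

theorem stmt_13 (n : ℕ) (hn : 2 ≤ n) (P : Fin n → ℝ) (hP : ∀ i, 0 < P i)
    (hsum : ∑ i, P i = 1) (r : ℝ) (hr0 : 0 < r) (hr1 : r < 1) :
    ∃ p ∈ Set.Icc (1 / (n : ℝ)) 1,
      (p ^ r + ((n : ℝ) - 1) ^ (1 - r) * (1 - p) ^ r) ^ (1 / r)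
          = (∑ i, P i ^ r) ^ (1 / r) ∧
      (∀ s : ℝ, r < s → s < 1 →
        (p ^ s + ((n : ℝ) - 1) ^ (1 - s) * (1 - p) ^ s) ^ (1 / s)
          ≤ (∑ i, P i ^ s) ^ (1 / s)) ∧
      (∀ s : ℝ, (0 < s ∧ s < r) ∨ 1 < s →
        (∑ i, P i ^ s) ^ (1 / s)
          ≤ (p ^ s + ((n : ℝ) - 1) ^ (1 - s) * (1 - p) ^ s) ^ (1 / s)) ∧
      (∀ i, P i ≤ p) := by
  have : Nontrivial (Fin n) := Fin.nontrivial_iff_two_le.2 hn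
  obtain ⟨i₀, hi₀⟩ := Finite.exists_max P
  obtain ⟨p, ⟨hi₀p, hp1⟩, hpr⟩ := exists_vnPowSum_eq hP hsum i₀ hr0 hr1
  have hPp : ∀ i, P i ≤ p := fun i => (hi₀ i).trans hi₀p
  obtain ⟨hlow, hmid, hhigh⟩ := vnPowSum_sign_pattern hP hsum hPp hp1 hr0 hr1 hpr
  rw [Fintype.card_fin] at hpr hlow hmid hhigh
  have hnp : 1 / (n : ℝ) ≤ p := by
    obtain ⟨i, -, hi⟩ := exists_le_of_sum_le univ_nonempty (f := fun _ => 1 / (n : ℝ)) (g := P)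
      (by simp [hsum, (show (n : ℝ) ≠ 0 by positivity)])
    exact hi.trans (hPp i)
  have hv := vnPowSum_nonneg (n := n) (by omega) ((hP i₀).le.trans hi₀p) hp1.le
  have hPs : ∀ s : ℝ, 0 ≤ ∑ i, P i ^ s := fun s => sum_nonneg fun i _ => rpow_nonneg (hP i).le s
  refine ⟨p, ⟨hnp, hp1.le⟩, congrArg (· ^ (1 / r)) hpr, fun s hrs hs1 => ?_, fun s hs => ?_, hPp⟩
  · exact rpow_le_rpow (hv s) (hmid s ⟨hrs.le, hs1.le⟩)
      (one_div_nonneg.2 (hr0.trans hrs).le)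
  · rcases hs with ⟨hs0, hsr⟩ | hs1
    · exact rpow_le_rpow (hPs s) (hlow s ⟨hs0.le, hsr.le⟩) (one_div_nonneg.2 hs0.le)
    · exact rpow_le_rpow (hPs s) (hhigh s hs1.le)
        (one_div_nonneg.2 (zero_le_one.trans hs1.le))
end

section
/- Let P be a probability distribution on a finite set with |supp(P)| = n, and let 0 < α ≤ β ≤ ∞. Then H_β(P) ≥ H_β(v_n(p)) where p = H_α^{-1}(v_n : H_α(P)); symmetrically, if 0 < β ≤ α ≤ ∞ then H_β(P) ≤ H_β(v_n(p)). -/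
open scoped ENNReal

/-- The distribution `v_n(p)`: one mass `p` and `n-1` masses `(1-p)/(n-1)`. -/
noncomputable def vDist (n : ℕ) (p : ℝ) : Fin n → ℝ :=
  fun i => if (i : ℕ) = 0 then p else (1 - p) / ((n : ℝ) - 1)

/-- The Rényi entropy of order `α ∈ (0, ∞]` of a distribution on `Fin n`:
`H_α(P) = (1/(1-α)) ln Σ_i P(i)^α` for `α ≠ 1, ∞`, Shannon entropy at `α = 1`,
min-entropy `-ln max_i P(i)` at `α = ∞`. -/
noncomputable def renyiF {n : ℕ} (P : Fin n → ℝ) (α : ℝ≥0∞) : ℝ :=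
  if α = ⊤ then - Real.log (⨆ i, P i)
  else if α = 1 then - ∑ i, P i * Real.log (P i)
  else (1 / (1 - α.toReal)) * Real.log (∑ i, P i ^ α.toReal)

/-!
If `α < ∞`, the Rényi entropy of order `a = α` is an increasing function of
`∑ i, φ_a (P i)` for a strictly concave `φ_a` (a Tsallis-type sum). By Jensen's inequality
`v_n(q)` maximises this sum among distributions whose largest mass is `q`, and
`x ↦ ∑ i, φ_a (v_n(x) i)` is strictly decreasing on `[1/n, 1]`; hence `H_α(v_n(p)) = H_α(P)` forces
`P i ≤ p < 1` for all `i`.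

Put `r = (1 - p)/(n - 1)`. The function `G(s) = ∑ v_n(p)_i ^ s - ∑ P_i ^ s` is an exponential sum
`∑ ±exp (s log x)` whose coefficients, read by decreasing exponent, are `+` at `log p`, `-` for the
masses of `P` in `[r, p]`, `+` at `log r` and `-` below: at most three sign changes. It vanishes
at `0`, `1` and `α` (twice at `1` when `α = 1`, since the Shannon entropies agree). Descartes' rule
of signs for exponential sums, proved by Rolle's theorem after multiplying by `exp (-t s)`,
then pins down the sign: `G(s) s (s - 1) (s - α) ≥ 0`. This is the claimed comparison of `H_β` for
`β` on either side of `α` (at `β = 1` through `G'(1)`).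

If `α = ∞` the hypothesis says `max P = p`, and the claim is Jensen's inequality again.
-/

open Real Finset Set

section SignOfDerivative

variable {g g' : ℝ → ℝ} {a s : ℝ}

lemma MonotoneOn.mul_sub_nonneg_of_eq_zero {S : Set ℝ} (hg : MonotoneOn g S) (ha : a ∈ S)
    (hs : s ∈ S) (h0 : g a = 0) : 0 ≤ g s * (s - a) := by
  rcases le_total s a with h | h
  · exact mul_nonneg_of_nonpos_of_nonpos (h0 ▸ hg hs ha h) (sub_nonpos.mpr h)
  · exact mul_nonneg (h0 ▸ hg ha hs h) (sub_nonneg.mpr h)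

lemma AntitoneOn.mul_sub_nonpos_of_eq_zero {S : Set ℝ} (hg : AntitoneOn g S) (ha : a ∈ S)
    (hs : s ∈ S) (h0 : g a = 0) : g s * (s - a) ≤ 0 := by
  rcases le_total s a with h | h
  · exact mul_nonpos_of_nonneg_of_nonpos (h0 ▸ hg hs ha h) (sub_nonpos.mpr h)
  · exact mul_nonpos_of_nonpos_of_nonneg (h0 ▸ hg ha hs h) (sub_nonneg.mpr h)

lemma monotoneOn_of_forall_hasDerivAt {D : Set ℝ} (hD : Convex ℝ D)
    (hg : ∀ s, HasDerivAt g (g' s) s) (h : ∀ s ∈ interior D, 0 ≤ g' s) : MonotoneOn g D :=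
  monotoneOn_of_hasDerivWithinAt_nonneg hD
    (fun s _ => (hg s).continuousAt.continuousWithinAt) (fun s _ => (hg s).hasDerivWithinAt) h

lemma antitoneOn_of_forall_hasDerivAt {D : Set ℝ} (hD : Convex ℝ D)
    (hg : ∀ s, HasDerivAt g (g' s) s) (h : ∀ s ∈ interior D, g' s ≤ 0) : AntitoneOn g D :=
  antitoneOn_of_hasDerivWithinAt_nonpos hD
    (fun s _ => (hg s).continuousAt.continuousWithinAt) (fun s _ => (hg s).hasDerivWithinAt) h

lemma mul_sub_nonneg_of_deriv_nonneg (hg : ∀ s, HasDerivAt g (g' s) s) (hg' : ∀ s, 0 ≤ g' s)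
    (h0 : g a = 0) (s : ℝ) : 0 ≤ g s * (s - a) :=
  ((monotone_of_hasDerivAt_nonneg hg hg').monotoneOn univ).mul_sub_nonneg_of_eq_zero
    (mem_univ a) (mem_univ s) h0

lemma mul_sub_mul_sub_nonneg_of_deriv (hg : ∀ s, HasDerivAt g (g' s) s) {ξ a₁ a₂ : ℝ}
    (hg' : ∀ s, 0 ≤ g' s * (s - ξ)) (h₁ : a₁ ≤ ξ) (h₂ : ξ ≤ a₂) (hz₁ : g a₁ = 0)
    (hz₂ : g a₂ = 0) (s : ℝ) : 0 ≤ g s * ((s - a₁) * (s - a₂)) := by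
  have hanti : AntitoneOn g (Iic ξ) := antitoneOn_of_forall_hasDerivAt (convex_Iic ξ) hg
    fun s hs => nonpos_of_mul_nonneg_left (hg' s) (sub_neg.mpr (interior_Iic.subset hs))
  have hmono : MonotoneOn g (Ici ξ) := monotoneOn_of_forall_hasDerivAt (convex_Ici ξ) hg
    fun s hs => nonneg_of_mul_nonneg_left (hg' s) (sub_pos.mpr (interior_Ici.subset hs))
  rcases le_total s ξ with h | h
  · have h₁' := hanti.mul_sub_nonpos_of_eq_zero h₁ h hz₁
    nlinarith
  · have h₂' := hmono.mul_sub_nonneg_of_eq_zero h₂ h hz₂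
    nlinarith

lemma mul_sub_mul_sub_mul_sub_nonneg_of_deriv (hg : ∀ s, HasDerivAt g (g' s) s)
    {ξ₁ ξ₂ a₁ a₂ a₃ : ℝ} (hg' : ∀ s, 0 ≤ g' s * ((s - ξ₁) * (s - ξ₂)))
    (h₁ : a₁ ≤ ξ₁) (h₂ : ξ₁ ≤ a₂) (h₃ : a₂ ≤ ξ₂) (h₄ : ξ₂ ≤ a₃)
    (hz₁ : g a₁ = 0) (hz₂ : g a₂ = 0) (hz₃ : g a₃ = 0) (s : ℝ) :
    0 ≤ g s * ((s - a₁) * (s - a₂) * (s - a₃)) := by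
  have hmono₁ : MonotoneOn g (Iic ξ₁) := monotoneOn_of_forall_hasDerivAt (convex_Iic ξ₁) hg
    fun s hs => by
      have hs : s < ξ₁ := interior_Iic.subset hs
      exact nonneg_of_mul_nonneg_left (hg' s) (by nlinarith)
  have hanti : AntitoneOn g (Icc ξ₁ ξ₂) := antitoneOn_of_forall_hasDerivAt (convex_Icc ξ₁ ξ₂) hg
    fun s hs => by
      have hs : s ∈ Ioo ξ₁ ξ₂ := interior_Icc.subset hs
      exact nonpos_of_mul_nonneg_left (hg' s) (by nlinarith [hs.1, hs.2])
  have hmono₂ : MonotoneOn g (Ici ξ₂) := monotoneOn_of_forall_hasDerivAt (convex_Ici ξ₂) hg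
    fun s hs => by
      have hs : ξ₂ < s := interior_Ici.subset hs
      exact nonneg_of_mul_nonneg_left (hg' s) (by nlinarith)
  rcases le_total s ξ₁ with hs₁ | hs₁
  · have h₁' := hmono₁.mul_sub_nonneg_of_eq_zero h₁ hs₁ hz₁
    have h₂₃ : 0 ≤ (s - a₂) * (s - a₃) := by nlinarith
    nlinarith
  rcases le_total s ξ₂ with hs₂ | hs₂
  · have h₂' := hanti.mul_sub_nonpos_of_eq_zero ⟨h₂, h₃⟩ ⟨hs₁, hs₂⟩ hz₂
    have h₁₃ : (s - a₁) * (s - a₃) ≤ 0 := by nlinarith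
    nlinarith
  · have h₃' := hmono₂.mul_sub_nonneg_of_eq_zero h₄ hs₂ hz₃
    have h₁₂ : 0 ≤ (s - a₁) * (s - a₂) := by nlinarith
    nlinarith

lemma HasDerivAt.mul_nonneg_of_forall_mul_nonneg {N : ℝ → ℝ} {d x : ℝ} (hg : HasDerivAt g d x)
    (hx : g x = 0) (hN : ContinuousAt N x) (h : ∀ s, 0 ≤ g s * ((s - x) * N s)) :
    0 ≤ d * N x := by
  refine ge_of_tendsto ((hasDerivAt_iff_tendsto_slope.mp hg).mul
    (hN.tendsto.mono_left nhdsWithin_le_nhds)) (eventually_nhdsWithin_of_forall fun s hs => ?_)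
  have hs : s - x ≠ 0 := sub_ne_zero.mpr hs
  rw [slope_def_field, hx, sub_zero,
    show g s / (s - x) * N s = g s * ((s - x) * N s) / (s - x) ^ 2 by field_simp]
  exact div_nonneg (h s) (sq_nonneg _)

end SignOfDerivative

section ExpSum

variable {ι : Type*} [Fintype ι] {c l : ι → ℝ}

/-- In the sign rules below, `∀ i, 0 ≤ c i * ((l i - t₁) * ⋯ * (l i - tₖ))` says that, ordered by
their exponents, the coefficients change sign only at the thresholds `t₁, …, tₖ`. -/
noncomputable def expSum (c l : ι → ℝ) (s : ℝ) : ℝ := ∑ i, c i * exp (l i * s)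

lemma hasDerivAt_expSum (c l : ι → ℝ) (s : ℝ) :
    HasDerivAt (expSum c l) (expSum (fun i => c i * l i) l s) s := by
  refine HasDerivAt.fun_sum fun i _ => ?_
  have h := (((hasDerivAt_id s).const_mul (l i)).exp).const_mul (c i)
  simp only [id, mul_one] at h
  exact h.congr_deriv (by ring)

lemma expSum_sub_const (c l : ι → ℝ) (t s : ℝ) :
    expSum c (fun i => l i - t) s = exp (-(t * s)) * expSum c l s := by
  simp only [expSum, mul_sum]
  refine sum_congr rfl fun i _ => ?_
  rw [show (l i - t) * s = l i * s + -(t * s) by ring, exp_add]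
  ring

lemma expSum_deriv_sub_const (c l : ι → ℝ) (t s : ℝ) :
    expSum (fun i => c i * (l i - t)) (fun i => l i - t) s =
      exp (-(t * s)) * (expSum (fun i => c i * l i) l s - t * expSum c l s) := by
  rw [expSum_sub_const]
  congr 1
  simp only [expSum, mul_sum, ← sum_sub_distrib]
  exact sum_congr rfl fun i _ => by ring

lemma expSum_sub_const_eq_zero {t s : ℝ} (h : expSum c l s = 0) :
    expSum c (fun i => l i - t) s = 0 := by
  rw [expSum_sub_const, h, mul_zero]

lemma expSum_sub_const_mul_nonneg_iff {t s x : ℝ} :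
    0 ≤ expSum c (fun i => l i - t) s * x ↔ 0 ≤ expSum c l s * x := by
  rw [expSum_sub_const, mul_assoc, mul_nonneg_iff_of_pos_left (exp_pos _)]

lemma exists_expSum_deriv_eq_zero {a b : ℝ} (hab : a < b) (ha : expSum c l a = 0)
    (hb : expSum c l b = 0) : ∃ ξ ∈ Ioo a b, expSum (fun i => c i * l i) l ξ = 0 :=
  exists_hasDerivAt_eq_zero hab
    (fun s _ => (hasDerivAt_expSum c l s).continuousAt.continuousWithinAt) (ha.trans hb.symm)
    fun s _ => hasDerivAt_expSum c l s

lemma expSum_mul_sub_nonneg {t a : ℝ} (hc : ∀ i, 0 ≤ c i * (l i - t))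
    (ha : expSum c l a = 0) (s : ℝ) : 0 ≤ expSum c l s * (s - a) := by
  rw [← expSum_sub_const_mul_nonneg_iff (t := t)]
  refine mul_sub_nonneg_of_deriv_nonneg (hasDerivAt_expSum _ _) (fun s => ?_)
    (expSum_sub_const_eq_zero ha) s
  exact sum_nonneg fun i _ => mul_nonneg (hc i) (exp_pos _).le

lemma expSum_mul_sub_mul_sub_nonneg {t₁ t₂ a₁ a₂ : ℝ}
    (hc : ∀ i, 0 ≤ c i * ((l i - t₁) * (l i - t₂))) (h₁₂ : a₁ < a₂)
    (hz₁ : expSum c l a₁ = 0) (hz₂ : expSum c l a₂ = 0) (s : ℝ) :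
    0 ≤ expSum c l s * ((s - a₁) * (s - a₂)) := by
  rw [← expSum_sub_const_mul_nonneg_iff (t := t₁)]
  obtain ⟨ξ, hξ, hξ0⟩ := exists_expSum_deriv_eq_zero h₁₂
    (expSum_sub_const_eq_zero (t := t₁) hz₁) (expSum_sub_const_eq_zero hz₂)
  refine mul_sub_mul_sub_nonneg_of_deriv (hasDerivAt_expSum _ _) (fun s => ?_)
    hξ.1.le hξ.2.le (expSum_sub_const_eq_zero hz₁) (expSum_sub_const_eq_zero hz₂) s
  refine expSum_mul_sub_nonneg (t := t₂ - t₁) (fun i => ?_) hξ0 s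
  convert hc i using 1
  ring

/-- Descartes' rule of signs with three sign changes, zeros counted with multiplicity. -/
lemma expSum_mul_sub_mul_sub_mul_sub_nonneg {t₁ t₂ t₃ a₁ a₂ a₃ : ℝ}
    (hc : ∀ i, 0 ≤ c i * ((l i - t₁) * (l i - t₂) * (l i - t₃))) (h₁₂ : a₁ < a₂)
    (hz₁ : expSum c l a₁ = 0) (hz₂ : expSum c l a₂ = 0)
    (hz₃ : a₂ < a₃ ∧ expSum c l a₃ = 0 ∨ a₂ = a₃ ∧ HasDerivAt (expSum c l) 0 a₂) (s : ℝ) :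
    0 ≤ expSum c l s * ((s - a₁) * (s - a₂) * (s - a₃)) := by
  rw [← expSum_sub_const_mul_nonneg_iff (t := t₁)]
  obtain ⟨ξ₁, hξ₁, hξ₁0⟩ := exists_expSum_deriv_eq_zero h₁₂
    (expSum_sub_const_eq_zero (t := t₁) hz₁) (expSum_sub_const_eq_zero hz₂)
  have hz₃' : expSum c l a₃ = 0 := by
    rcases hz₃ with ⟨-, h⟩ | ⟨rfl, -⟩ <;> assumption
  obtain ⟨ξ₂, hξ₂, hξ₂0⟩ : ∃ ξ₂ ∈ Icc a₂ a₃,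
      expSum (fun i => c i * (l i - t₁)) (fun i => l i - t₁) ξ₂ = 0 := by
    rcases hz₃ with ⟨h₂₃, -⟩ | ⟨rfl, hd⟩
    · obtain ⟨ξ, hξ, hξ0⟩ := exists_expSum_deriv_eq_zero h₂₃
        (expSum_sub_const_eq_zero (t := t₁) hz₂) (expSum_sub_const_eq_zero hz₃')
      exact ⟨ξ, Ioo_subset_Icc_self hξ, hξ0⟩
    · refine ⟨a₂, left_mem_Icc.mpr le_rfl, ?_⟩
      rw [expSum_deriv_sub_const, (hasDerivAt_expSum c l a₂).unique hd, hz₂]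
      ring
  refine mul_sub_mul_sub_mul_sub_nonneg_of_deriv (hasDerivAt_expSum _ _) (fun s => ?_)
    hξ₁.1.le hξ₁.2.le hξ₂.1 hξ₂.2 (expSum_sub_const_eq_zero hz₁)
    (expSum_sub_const_eq_zero hz₂) (expSum_sub_const_eq_zero hz₃') s
  refine expSum_mul_sub_mul_sub_nonneg (t₁ := t₂ - t₁) (t₂ := t₃ - t₁) (fun i => ?_)
    (hξ₁.2.trans_le hξ₂.1) hξ₁0 hξ₂0 s
  convert hc i using 1
  ring

end ExpSum

lemma lt_one_of_pos_of_sum_eq_one {ι : Type*} [Fintype ι] [Nontrivial ι] {P : ι → ℝ}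
    (hP : ∀ i, 0 < P i) (hsum : ∑ i, P i = 1) (i : ι) : P i < 1 := by
  obtain ⟨j, hj⟩ := exists_ne i
  exact hsum ▸ single_lt_sum hj (mem_univ i) (mem_univ j) (hP j) fun k _ _ => (hP k).le

section VDist

variable {n : ℕ} {p : ℝ}

lemma sum_vDist (hn : 1 ≤ n) (f : ℝ → ℝ) (p : ℝ) :
    ∑ i, f (vDist n p i) = f p + ((n : ℝ) - 1) * f ((1 - p) / ((n : ℝ) - 1)) := by
  obtain ⟨m, rfl⟩ : ∃ m, n = m + 1 := ⟨n - 1, by omega⟩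
  simp [Fin.sum_univ_succ, vDist]

lemma vDist_eq_or (n : ℕ) (p : ℝ) (i : Fin n) :
    vDist n p i = p ∨ vDist n p i = (1 - p) / ((n : ℝ) - 1) := by
  unfold vDist
  split_ifs <;> simp

lemma vDist_one_one {P : Fin 1 → ℝ} (hsum : ∑ i, P i = 1) : vDist 1 1 = P := by
  funext i
  rw [Fin.sum_univ_one] at hsum
  simp [Subsingleton.elim i 0, vDist, hsum]

lemma vDist_le (hn : 2 ≤ n) (hp : 1 / (n : ℝ) ≤ p) (i : Fin n) : vDist n p i ≤ p := by
  have hn' : (2 : ℝ) ≤ n := by exact_mod_cast hn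
  rw [div_le_iff₀ (by linarith)] at hp
  rcases vDist_eq_or n p i with h | h <;> rw [h]
  rw [div_le_iff₀ (by linarith)]
  linarith

lemma vDist_pos (hn : 2 ≤ n) (hp : 0 < p) (hp1 : p < 1) (i : Fin n) : 0 < vDist n p i := by
  have hn' : (2 : ℝ) ≤ n := by exact_mod_cast hn
  rcases vDist_eq_or n p i with h | h <;> rw [h]
  · exact hp
  · exact div_pos (by linarith) (by linarith)

lemma vDist_nonneg (hn : 2 ≤ n) (hp : p ∈ Icc (1 / (n : ℝ)) 1) (i : Fin n) :
    0 ≤ vDist n p i := by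
  have hn' : (2 : ℝ) ≤ n := by exact_mod_cast hn
  rcases vDist_eq_or n p i with h | h <;> rw [h]
  · exact le_trans (by positivity) hp.1
  · exact div_nonneg (by linarith [hp.2]) (by linarith)

lemma sum_vDist_self (hn : 2 ≤ n) (p : ℝ) : ∑ i, vDist n p i = 1 := by
  have hn' : (2 : ℝ) ≤ n := by exact_mod_cast hn
  have h := sum_vDist (n := n) (by omega) id p
  simp only [id] at h
  rw [h, mul_div_cancel₀ _ (by linarith)]
  ring

lemma iSup_vDist (hn : 2 ≤ n) (hp : 1 / (n : ℝ) ≤ p) : ⨆ i, vDist n p i = p := by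
  have : NeZero n := ⟨by omega⟩
  have h0 : vDist n p 0 = p := by simp [vDist]
  exact le_antisymm (ciSup_le (vDist_le hn hp)) (h0 ▸ le_ciSup (finite_range _).bddAbove 0)

end VDist

section Concave

variable {φ : ℝ → ℝ} {n : ℕ} {p : ℝ} {P : Fin n → ℝ}

lemma ConcaveOn.sum_le_sum_vDist (hφ : ConcaveOn ℝ (Ici 0) φ) (hn : 2 ≤ n)
    (hP : ∀ i, 0 ≤ P i) (hsum : ∑ i, P i = 1) (i₀ : Fin n) :
    ∑ i, φ (P i) ≤ ∑ i, φ (vDist n (P i₀) i) := by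
  have hn' : (0 : ℝ) < (n : ℝ) - 1 := by
    have : (2 : ℝ) ≤ n := by exact_mod_cast hn
    linarith
  have hcard : ((univ.erase i₀).card : ℝ) = (n : ℝ) - 1 := by
    rw [card_erase_of_mem (mem_univ _), card_univ, Fintype.card_fin, Nat.cast_sub (by omega)]
    simp
  have hrest : ∑ i ∈ univ.erase i₀, P i = 1 - P i₀ := by
    rw [← hsum, ← add_sum_erase _ _ (mem_univ i₀), add_sub_cancel_left]
  have hjensen := hφ.le_map_sum (t := univ.erase i₀) (w := fun _ => ((n : ℝ) - 1)⁻¹) (p := P)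
    (fun _ _ => by positivity) (by rw [sum_const, nsmul_eq_mul, hcard, mul_inv_cancel₀ hn'.ne'])
    (fun i _ => hP i)
  simp only [smul_eq_mul] at hjensen
  rw [← mul_sum, ← mul_sum, hrest, inv_mul_eq_div, inv_mul_eq_div, div_le_iff₀ hn'] at hjensen
  rw [sum_vDist (by omega), ← add_sum_erase _ _ (mem_univ i₀)]
  linarith

lemma StrictConcaveOn.strictAntiOn_sum_vDist (hφ : StrictConcaveOn ℝ (Ici 0) φ) (hn : 2 ≤ n) :
    StrictAntiOn (fun x => ∑ i, φ (vDist n x i)) (Icc (1 / (n : ℝ)) 1) := by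
  intro x hx y hy hxy
  have hn' : (2 : ℝ) ≤ n := by exact_mod_cast hn
  have hm : (0 : ℝ) < (n : ℝ) - 1 := by linarith
  simp only [sum_vDist (f := φ) (n := n) (by omega)]
  set m := (n : ℝ) - 1
  set rx := (1 - x) / m
  set ry := (1 - y) / m
  have hdiff : rx - ry = (y - x) / m := by simp only [rx, ry]; ring
  have hry : 0 ≤ ry := div_nonneg (by linarith [hy.2]) hm.le
  have hryx : ry < rx := by rw [← sub_pos, hdiff]; exact div_pos (by linarith) hm
  have hrxx : rx ≤ x := by
    have := hx.1
    rw [div_le_iff₀ (by linarith)] at this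
    rw [div_le_iff₀ hm]
    linarith
  have hmem : ∀ z, ry ≤ z → z ∈ Ici (0 : ℝ) := fun z hz => hry.trans hz
  -- the points are ordered `ry < rx ≤ x < y`, and secant slopes of `φ` strictly decrease
  have h₁ : slope φ x y < slope φ ry y := by
    rw [slope_comm φ x, slope_comm φ ry]
    simpa only [slope_def_field] using hφ.secant_strict_mono (hmem y (by linarith))
      (hmem ry le_rfl) (hmem x (by linarith)) (by linarith) (by linarith) (by linarith)
  have h₂ : slope φ ry y < slope φ ry rx := by
    simpa only [slope_def_field] using hφ.secant_strict_mono (hmem ry le_rfl)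
      (hmem rx hryx.le) (hmem y (by linarith)) (by linarith) (by linarith) (by linarith)
  have h₃ := h₁.trans h₂
  rw [slope_def_field, slope_def_field, hdiff, div_div_eq_mul_div,
    div_lt_div_iff_of_pos_right (by linarith)] at h₃
  linarith

lemma StrictConcaveOn.sum_vDist_one_lt (hφ : StrictConcaveOn ℝ (Ici 0) φ) (hn : 2 ≤ n)
    (hP : ∀ i, 0 < P i) (hsum : ∑ i, P i = 1) :
    ∑ i, φ (vDist n 1 i) < ∑ i, φ (P i) := by
  have : Nontrivial (Fin n) := Fin.nontrivial_iff_two_le.mpr hn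
  have hlt := lt_one_of_pos_of_sum_eq_one hP hsum
  have hterm : ∀ i, P i * φ 1 + (1 - P i) * φ 0 < φ (P i) := fun i => by
    simpa using hφ.2 (mem_Ici.mpr zero_le_one) (mem_Ici.mpr le_rfl) one_ne_zero (hP i)
      (sub_pos.mpr (hlt i)) (add_sub_cancel _ _)
  have hsum' : ∑ i, (P i * φ 1 + (1 - P i) * φ 0) = φ 1 + ((n : ℝ) - 1) * φ 0 := by
    simp only [sum_add_distrib, ← sum_mul, sum_sub_distrib, hsum, sum_const, card_univ,
      Fintype.card_fin, nsmul_eq_mul, mul_one, one_mul]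
  rw [sum_vDist (by omega), sub_self, zero_div, ← hsum']
  have : Nonempty (Fin n) := ⟨⟨0, by omega⟩⟩
  exact sum_lt_sum_of_nonempty univ_nonempty fun i _ => hterm i

lemma StrictConcaveOn.lt_one_and_le_of_sum_vDist_eq (hφ : StrictConcaveOn ℝ (Ici 0) φ)
    (hn : 2 ≤ n) (hP : ∀ i, 0 < P i) (hsum : ∑ i, P i = 1) (hp : p ∈ Icc (1 / (n : ℝ)) 1)
    (heq : ∑ i, φ (vDist n p i) = ∑ i, φ (P i)) : p < 1 ∧ ∀ i, P i ≤ p := by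
  refine ⟨hp.2.lt_of_ne ?_, fun i => ?_⟩
  · rintro rfl
    exact (hφ.sum_vDist_one_lt hn hP hsum).ne heq
  · by_contra! h
    have : Nontrivial (Fin n) := Fin.nontrivial_iff_two_le.mpr hn
    have hi : P i ∈ Icc (1 / (n : ℝ)) 1 :=
      ⟨hp.1.trans h.le, (lt_one_of_pos_of_sum_eq_one hP hsum i).le⟩
    have hlt : ∑ j, φ (vDist n (P i) j) < ∑ j, φ (vDist n p j) :=
      hφ.strictAntiOn_sum_vDist hn hp hi h
    have hle := hφ.concaveOn.sum_le_sum_vDist hn (fun j => (hP j).le) hsum i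
    linarith

end Concave

section Kernel

/-- Up to an additive constant, `∑ i, renyiKernel a (P i)` is the Tsallis entropy of order `a`. -/
noncomputable def renyiKernel (a x : ℝ) : ℝ := if a = 1 then negMulLog x else x ^ a / (1 - a)

lemma strictConcaveOn_renyiKernel {a : ℝ} (ha : 0 < a) :
    StrictConcaveOn ℝ (Ici 0) (renyiKernel a) := by
  unfold renyiKernel
  rcases lt_trichotomy a 1 with h | rfl | h
  · simp only [h.ne, if_false]
    refine ⟨convex_Ici 0, fun x hx y hy hxy u v hu hv huv => ?_⟩
    have key := (strictConcaveOn_rpow ha h).2 hx hy hxy hu hv huv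
    simp only [smul_eq_mul] at key ⊢
    rw [mul_div_assoc', mul_div_assoc', ← add_div]
    exact div_lt_div_of_pos_right key (sub_pos.mpr h)
  · simpa using strictConcaveOn_negMulLog
  · simp only [h.ne', if_false]
    refine ⟨convex_Ici 0, fun x hx y hy hxy u v hu hv huv => ?_⟩
    have key := (strictConvexOn_rpow h).2 hx hy hxy hu hv huv
    simp only [smul_eq_mul] at key ⊢
    rw [mul_div_assoc', mul_div_assoc', ← add_div]
    exact (div_lt_div_right_of_neg (sub_neg.mpr h)).mpr key

variable {n : ℕ} {Q P : Fin n → ℝ}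

lemma sum_renyiKernel_of_ne_one {a : ℝ} (ha : a ≠ 1) :
    ∑ i, renyiKernel a (Q i) = (1 - a)⁻¹ * ∑ i, Q i ^ a := by
  simp only [renyiKernel, ha, if_false, mul_sum, div_eq_inv_mul]

lemma sum_renyiKernel_one : ∑ i, renyiKernel 1 (Q i) = -∑ i, Q i * log (Q i) := by
  simp only [renyiKernel, if_true, negMulLog, ← sum_neg_distrib, neg_mul]

lemma sum_rpow_pos (hQ : ∀ i, 0 ≤ Q i) (hsum : ∑ i, Q i = 1) (b : ℝ) :
    0 < ∑ i, Q i ^ b := by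
  obtain ⟨j, -, hj⟩ := exists_lt_of_sum_lt (s := univ) (f := 0) (g := Q) (by simp [hsum])
  exact sum_pos' (fun i _ => rpow_nonneg (hQ i) b) ⟨j, mem_univ j, rpow_pos_of_pos hj b⟩

lemma mul_log_le_mul_log_iff {k A B : ℝ} (hA : 0 < A) (hB : 0 < B) :
    k * log A ≤ k * log B ↔ k * A ≤ k * B := by
  rcases lt_trichotomy k 0 with hk | rfl | hk
  · rw [mul_le_mul_left_of_neg hk, mul_le_mul_left_of_neg hk, log_le_log_iff hB hA]
  · simp
  · rw [mul_le_mul_iff_of_pos_left hk, mul_le_mul_iff_of_pos_left hk, log_le_log_iff hA hB]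

lemma renyiF_le_renyiF_iff (hQ : ∀ i, 0 ≤ Q i) (hQ1 : ∑ i, Q i = 1) (hP : ∀ i, 0 ≤ P i)
    (hP1 : ∑ i, P i = 1) {β : ℝ≥0∞} (hβ : β ≠ ⊤) :
    renyiF Q β ≤ renyiF P β ↔
      ∑ i, renyiKernel β.toReal (Q i) ≤ ∑ i, renyiKernel β.toReal (P i) := by
  by_cases h1 : β = 1
  · simp [renyiF, h1, sum_renyiKernel_one]
  · have hb : β.toReal ≠ 1 := (ENNReal.toReal_eq_one_iff β).not.mpr h1
    simp only [renyiF, hβ, h1, if_false, sum_renyiKernel_of_ne_one hb, one_div]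
    exact mul_log_le_mul_log_iff (sum_rpow_pos hQ hQ1 _) (sum_rpow_pos hP hP1 _)

end Kernel

section PowerSums

variable {n : ℕ} {p : ℝ} {Q P : Fin n → ℝ}

lemma hasDerivAt_sum_rpow_sub (hQ : ∀ i, 0 < Q i) (hP : ∀ i, 0 < P i) (s : ℝ) :
    HasDerivAt (fun s => ∑ i, Q i ^ s - ∑ i, P i ^ s)
      (∑ i, Q i ^ s * log (Q i) - ∑ i, P i ^ s * log (P i)) s :=
  (HasDerivAt.fun_sum fun i _ => (hasStrictDerivAt_const_rpow (hQ i) s).hasDerivAt).sub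
    (HasDerivAt.fun_sum fun i _ => (hasStrictDerivAt_const_rpow (hP i) s).hasDerivAt)

lemma sum_rpow_sub_eq_expSum (hQ : ∀ i, 0 < Q i) (hP : ∀ i, 0 < P i) :
    (fun s => ∑ i, Q i ^ s - ∑ i, P i ^ s) =
      expSum (Sum.elim (fun _ => 1) (fun _ => -1)) (Sum.elim (log ∘ Q) (log ∘ P)) := by
  funext s
  simp [expSum, Fintype.sum_sum_type, rpow_def_of_pos (hQ _), rpow_def_of_pos (hP _),
    sub_eq_add_neg]

lemma sum_rpow_sub_sign_condition {r : ℝ} (hQ : ∀ i, Q i = p ∨ Q i = r) (hP : ∀ i, 0 < P i)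
    (hPp : ∀ i, P i ≤ p) (i : Fin n ⊕ Fin n) :
    0 ≤ Sum.elim (fun _ => (1 : ℝ)) (fun _ => -1) i *
      ((Sum.elim (log ∘ Q) (log ∘ P) i - log p) * (Sum.elim (log ∘ Q) (log ∘ P) i - log r) *
        (Sum.elim (log ∘ Q) (log ∘ P) i - log r)) := by
  rcases i with j | j
  · rcases hQ j with h | h <;> simp [h]
  · have hle : log (P j) - log p ≤ 0 := sub_nonpos.mpr (log_le_log (hP j) (hPp j))
    simp only [Sum.elim_inr, Function.comp]
    nlinarith [mul_nonpos_of_nonpos_of_nonneg hle (mul_self_nonneg (log (P j) - log r))]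

lemma sum_rpow_vDist_sub_mul_nonneg (hn : 2 ≤ n) (hp : 1 / (n : ℝ) ≤ p) (hp1 : p < 1)
    (hP : ∀ i, 0 < P i) (hsum : ∑ i, P i = 1) (hPp : ∀ i, P i ≤ p) {a : ℝ} (ha : 0 < a)
    (heq : ∑ i, renyiKernel a (vDist n p i) = ∑ i, renyiKernel a (P i)) (s : ℝ) :
    0 ≤ (∑ i, vDist n p i ^ s - ∑ i, P i ^ s) * (s * (s - 1) * (s - a)) := by
  have hv : ∀ i, 0 < vDist n p i := vDist_pos hn (lt_of_lt_of_le (by positivity) hp) hp1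
  set c : Fin n ⊕ Fin n → ℝ := Sum.elim (fun _ => 1) (fun _ => -1)
  set l : Fin n ⊕ Fin n → ℝ := Sum.elim (log ∘ vDist n p) (log ∘ P)
  have hG : ∀ s, ∑ i, vDist n p i ^ s - ∑ i, P i ^ s = expSum c l s :=
    congrFun (sum_rpow_sub_eq_expSum hv hP)
  have hsign := sum_rpow_sub_sign_condition (vDist_eq_or n p) hP hPp
  have hz₀ : expSum c l 0 = 0 := by rw [← hG]; simp
  have hz₁ : expSum c l 1 = 0 := by rw [← hG]; simp [sum_vDist_self hn, hsum]
  have hza : a ≠ 1 → expSum c l a = 0 := fun h => by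
    rw [sum_renyiKernel_of_ne_one h, sum_renyiKernel_of_ne_one h] at heq
    rw [← hG, sub_eq_zero]
    exact mul_left_cancel₀ (inv_ne_zero (sub_ne_zero.mpr h.symm)) heq
  rw [hG]
  rcases lt_trichotomy a 1 with h | rfl | h
  · convert expSum_mul_sub_mul_sub_mul_sub_nonneg hsign ha hz₀ (hza h.ne)
      (Or.inl ⟨h, hz₁⟩) s using 1
    ring
  · have hd : HasDerivAt (expSum c l) 0 1 := by
      rw [← funext hG]
      convert hasDerivAt_sum_rpow_sub hv hP 1 using 1
      rw [sum_renyiKernel_one, sum_renyiKernel_one, neg_inj] at heq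
      simp [heq]
    convert expSum_mul_sub_mul_sub_mul_sub_nonneg hsign one_pos hz₀ hz₁
      (Or.inr ⟨rfl, hd⟩) s using 1
    ring
  · convert expSum_mul_sub_mul_sub_mul_sub_nonneg hsign one_pos hz₀ hz₁
      (Or.inl ⟨h, hza h.ne'⟩) s using 1
    ring

lemma sum_renyiKernel_sub_mul_nonpos (hQ : ∀ i, 0 < Q i) (hP : ∀ i, 0 < P i)
    (hQP : ∑ i, Q i = ∑ i, P i) {a : ℝ}
    (hsign : ∀ s, 0 ≤ (∑ i, Q i ^ s - ∑ i, P i ^ s) * (s * (s - 1) * (s - a)))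
    {b : ℝ} (hb : 0 < b) :
    (∑ i, renyiKernel b (Q i) - ∑ i, renyiKernel b (P i)) * (b - a) ≤ 0 := by
  by_cases h1 : b = 1
  · subst h1
    have hd := (hasDerivAt_sum_rpow_sub hQ hP 1).mul_nonneg_of_forall_mul_nonneg
      (N := fun s => s * (s - a)) (by simp [hQP]) (by fun_prop)
      fun s => (hsign s).trans_eq (by ring)
    simp only [rpow_one] at hd
    rw [sum_renyiKernel_one, sum_renyiKernel_one]
    linarith
  · have hG : 0 ≤ (∑ i, Q i ^ b - ∑ i, P i ^ b) * ((b - 1) * (b - a)) :=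
      nonneg_of_mul_nonneg_right (a := b) ((hsign b).trans_eq (by ring)) hb
    have hb1 : 1 - b ≠ 0 := sub_ne_zero.mpr (Ne.symm h1)
    rw [sum_renyiKernel_of_ne_one h1, sum_renyiKernel_of_ne_one h1, ← mul_sub,
      show (1 - b)⁻¹ * (∑ i, Q i ^ b - ∑ i, P i ^ b) * (b - a) =
        -((∑ i, Q i ^ b - ∑ i, P i ^ b) * ((b - 1) * (b - a))) / (1 - b) ^ 2 by
        field_simp; ring]
    exact div_nonpos_of_nonpos_of_nonneg (neg_nonpos.mpr hG) (sq_nonneg _)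

end PowerSums

section Main

variable {n : ℕ} {p : ℝ} {P : Fin n → ℝ}

lemma iSup_pos_of_pos (hn : 1 ≤ n) (hP : ∀ i, 0 < P i) : 0 < ⨆ i, P i :=
  (hP ⟨0, hn⟩).trans_le (le_ciSup (finite_range P).bddAbove (⟨0, hn⟩ : Fin n))

lemma renyiF_vDist_top_le (hn : 2 ≤ n) (hP : ∀ i, 0 < P i) (hp : 1 / (n : ℝ) ≤ p)
    (hPp : ∀ i, P i ≤ p) : renyiF (vDist n p) ⊤ ≤ renyiF P ⊤ := by
  have : Nonempty (Fin n) := ⟨⟨0, by omega⟩⟩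
  simp only [renyiF, if_true, iSup_vDist hn hp, neg_le_neg_iff]
  exact log_le_log (iSup_pos_of_pos (by omega) hP) (ciSup_le hPp)

lemma renyiF_vDist_comparison_of_ne_top (hn : 2 ≤ n) (hP : ∀ i, 0 < P i)
    (hsum : ∑ i, P i = 1) {α β : ℝ≥0∞} (hα : 0 < α) (hαt : α ≠ ⊤) (hβ : 0 < β)
    (hp : p ∈ Icc (1 / (n : ℝ)) 1) (hinv : renyiF (vDist n p) α = renyiF P α) :
    (α ≤ β → renyiF (vDist n p) β ≤ renyiF P β) ∧
    (β ≤ α → renyiF P β ≤ renyiF (vDist n p) β) := by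
  have hv0 := vDist_nonneg hn hp
  have hv1 := sum_vDist_self hn p
  have hP0 : ∀ i, 0 ≤ P i := fun i => (hP i).le
  have ha : 0 < α.toReal := ENNReal.toReal_pos hα.ne' hαt
  have heq := le_antisymm ((renyiF_le_renyiF_iff hv0 hv1 hP0 hsum hαt).mp hinv.le)
    ((renyiF_le_renyiF_iff hP0 hsum hv0 hv1 hαt).mp hinv.ge)
  obtain ⟨hp1, hPp⟩ :=
    (strictConcaveOn_renyiKernel ha).lt_one_and_le_of_sum_vDist_eq hn hP hsum hp heq
  have hv := vDist_pos hn (lt_of_lt_of_le (by positivity) hp.1) hp1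
  have hcmp {b : ℝ} (hb : 0 < b) := sum_renyiKernel_sub_mul_nonpos hv hP (hv1.trans hsum.symm)
    (sum_rpow_vDist_sub_mul_nonneg hn hp.1 hp1 hP hsum hPp ha heq) hb
  refine ⟨fun hαβ => ?_, fun hβα => ?_⟩
  · rcases hαβ.eq_or_lt with rfl | hlt
    · exact hinv.le
    by_cases hβt : β = ⊤
    · exact hβt ▸ renyiF_vDist_top_le hn hP hp.1 hPp
    rw [renyiF_le_renyiF_iff hv0 hv1 hP0 hsum hβt, ← sub_nonpos]
    exact nonpos_of_mul_nonpos_left (hcmp (ENNReal.toReal_pos hβ.ne' hβt))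
      (sub_pos.mpr ((ENNReal.toReal_lt_toReal hαt hβt).mpr hlt))
  · rcases hβα.eq_or_lt with rfl | hlt
    · exact hinv.ge
    have hβt := hlt.ne_top
    rw [renyiF_le_renyiF_iff hP0 hsum hv0 hv1 hβt, ← sub_nonneg]
    exact nonneg_of_mul_nonpos_left (hcmp (ENNReal.toReal_pos hβ.ne' hβt))
      (sub_neg.mpr ((ENNReal.toReal_lt_toReal hβt hαt).mpr hlt))

lemma renyiF_le_renyiF_vDist_of_top (hn : 2 ≤ n) (hP : ∀ i, 0 < P i) (hsum : ∑ i, P i = 1)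
    {β : ℝ≥0∞} (hβ : 0 < β) (hp : p ∈ Icc (1 / (n : ℝ)) 1)
    (hinv : renyiF (vDist n p) ⊤ = renyiF P ⊤) : renyiF P β ≤ renyiF (vDist n p) β := by
  by_cases hβt : β = ⊤
  · exact hβt ▸ hinv.ge
  have hpmax : p = ⨆ i, P i := by
    simp only [renyiF, if_true, iSup_vDist hn hp.1, neg_inj] at hinv
    exact log_injOn_pos (lt_of_lt_of_le (by positivity) hp.1) (iSup_pos_of_pos (by omega) hP) hinv
  have : Nonempty (Fin n) := ⟨⟨0, by omega⟩⟩
  obtain ⟨i₀, hi₀⟩ := exists_eq_ciSup_of_finite (f := P)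
  rw [renyiF_le_renyiF_iff (fun i => (hP i).le) hsum (vDist_nonneg hn hp) (sum_vDist_self hn p)
    hβt, hpmax, ← hi₀]
  exact (strictConcaveOn_renyiKernel (ENNReal.toReal_pos hβ.ne' hβt)).concaveOn.sum_le_sum_vDist
    hn (fun i => (hP i).le) hsum i₀

end Main

theorem stmt_15 (n : ℕ) (hn : 1 ≤ n) (P : Fin n → ℝ) (hP : ∀ i, 0 < P i)
    (hsum : ∑ i, P i = 1) (α β : ℝ≥0∞) (hα : 0 < α) (hβ : 0 < β)
    (p : ℝ) (hp : p ∈ Set.Icc (1 / (n : ℝ)) 1)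
    (hinv : renyiF (vDist n p) α = renyiF P α) :
    (α ≤ β → renyiF (vDist n p) β ≤ renyiF P β) ∧
    (β ≤ α → renyiF P β ≤ renyiF (vDist n p) β) := by
  rcases hn.eq_or_lt with rfl | hn
  · obtain rfl : p = 1 := le_antisymm hp.2 (by simpa using hp.1)
    rw [vDist_one_one hsum]
    exact ⟨fun _ => le_rfl, fun _ => le_rfl⟩
  by_cases hαt : α = ⊤
  · subst hαt
    exact ⟨fun h => top_le_iff.mp h ▸ hinv.le,
      fun _ => renyiF_le_renyiF_vDist_of_top hn hP hsum hβ hp hinv⟩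
  · exact renyiF_vDist_comparison_of_ne_top hn hP hsum hα hαt hβ hp hinv
end

section
/- Let X be a random variable on a finite set with |supp(P_X)| ≤ n, let α ∈ (0,1) ∪ (1,∞), and let ε ∈ [P_e(X), (n-1)/n] where P_e(X) = 1 − max_x P_X(x). Then H_α(X) ≤ (1/(1-α))·ln((1-ε)^α + (n-1)^(1-α)·ε^α). -/
open Finset Real

lemma aux_sum_rpow_le {ι : Type*} (s : Finset ι) (x : ι → ℝ) (hx : ∀ i ∈ s, 0 ≤ x i)
    {α : ℝ} (hα0 : 0 < α) (hα1 : α ≤ 1) :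
    ∑ i ∈ s, x i ^ α ≤ (s.card : ℝ) ^ (1 - α) * (∑ i ∈ s, x i) ^ α := by
  rcases s.eq_empty_or_nonempty with rfl | hs
  · simp [Real.zero_rpow (ne_of_gt hα0)]
  have hk : 0 < (s.card : ℝ) := by exact_mod_cast Finset.card_pos.2 hs
  have h := Real.arith_mean_le_rpow_mean s (fun _ => (s.card : ℝ)⁻¹) (fun i => x i ^ α)
      (fun i _ => by positivity) (by simp [Finset.sum_const]; field_simp)
      (fun i _ => Real.rpow_nonneg (hx i ‹_›) α)
      (p := 1/α) (by rw [le_div_iff₀ hα0]; linarith)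
  have hsimp : ∀ i ∈ s, (s.card : ℝ)⁻¹ * (x i ^ α) ^ ((1:ℝ)/α)
      = (s.card : ℝ)⁻¹ * x i := by
    intro i hi
    rw [one_div, Real.rpow_rpow_inv (hx i hi) (ne_of_gt hα0)]
  rw [Finset.sum_congr rfl hsimp, ← Finset.mul_sum, ← Finset.mul_sum,
      Real.mul_rpow (by positivity) (Finset.sum_nonneg hx), one_div_one_div] at h
  have h2 : ∑ i ∈ s, x i ^ α ≤ (s.card : ℝ) * (((s.card : ℝ)⁻¹) ^ α * (∑ i ∈ s, x i) ^ α) := by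
    calc ∑ i ∈ s, x i ^ α = (s.card : ℝ) * ((s.card : ℝ)⁻¹ * ∑ i ∈ s, x i ^ α) := by
          field_simp
      _ ≤ _ := by
          exact mul_le_mul_of_nonneg_left h hk.le
  refine h2.trans (le_of_eq ?_)
  rw [← mul_assoc]
  congr 1
  rw [← Real.rpow_neg_one (s.card : ℝ), ← Real.rpow_mul hk.le]
  have he : (1:ℝ) - α = 1 + (-1)*α := by ring
  rw [he, Real.rpow_add hk, Real.rpow_one]

lemma aux_card_rpow_le_sum {ι : Type*} (s : Finset ι) (x : ι → ℝ) (hx : ∀ i ∈ s, 0 ≤ x i)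
    {α : ℝ} (hα1 : 1 ≤ α) :
    (s.card : ℝ) ^ (1 - α) * (∑ i ∈ s, x i) ^ α ≤ ∑ i ∈ s, x i ^ α := by
  have hα0 : (0:ℝ) < α := lt_of_lt_of_le one_pos hα1
  rcases s.eq_empty_or_nonempty with rfl | hs
  · simp [Real.zero_rpow (ne_of_gt hα0)]
  have hk : 0 < (s.card : ℝ) := by exact_mod_cast Finset.card_pos.2 hs
  have h := Real.rpow_arith_mean_le_arith_mean_rpow s (fun _ => (s.card : ℝ)⁻¹) x
      (fun i _ => by positivity) (by simp [Finset.sum_const]; field_simp)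
      (fun i hi => hx i hi) hα1
  rw [← Finset.mul_sum, ← Finset.mul_sum,
      Real.mul_rpow (by positivity) (Finset.sum_nonneg hx)] at h
  have h2 : (s.card : ℝ) * ((s.card : ℝ)⁻¹ ^ α * (∑ i ∈ s, x i) ^ α)
      ≤ (s.card : ℝ) * ((s.card : ℝ)⁻¹ * ∑ i ∈ s, x i ^ α) :=
    mul_le_mul_of_nonneg_left h hk.le
  calc (s.card : ℝ) ^ (1 - α) * (∑ i ∈ s, x i) ^ α
      = (s.card : ℝ) * ((s.card : ℝ)⁻¹ ^ α * (∑ i ∈ s, x i) ^ α) := by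
        rw [← mul_assoc]
        congr 1
        rw [← Real.rpow_neg_one (s.card : ℝ), ← Real.rpow_mul hk.le,
          (show (1:ℝ) - α = 1 + (-1)*α by ring), Real.rpow_add hk, Real.rpow_one]
    _ ≤ (s.card : ℝ) * ((s.card : ℝ)⁻¹ * ∑ i ∈ s, x i ^ α) := h2
    _ = ∑ i ∈ s, x i ^ α := by field_simp

lemma aux_hasDerivAt (c α t : ℝ) (h1 : (1:ℝ) - t ≠ 0) (ht : t ≠ 0) :
    HasDerivAt (fun t => (1-t)^α + c^(1-α) * t^α)
      (α * (1-t)^(α-1) * (-1) + c^(1-α) * (α * t^(α-1))) t := by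
  have hg : HasDerivAt (fun t : ℝ => (1-t)^α) (α * (1-t)^(α-1) * (-1)) t := by
    have h1' : HasDerivAt (fun t : ℝ => 1 - t) (-1) t := (hasDerivAt_id t).const_sub 1
    exact (Real.hasDerivAt_rpow_const (Or.inl h1)).comp t h1'
  have hh : HasDerivAt (fun t : ℝ => c^(1-α) * t^α) (c^(1-α) * (α * t^(α-1))) t :=
    (Real.hasDerivAt_rpow_const (Or.inl ht)).const_mul _
  exact hg.add hh

lemma aux_cont (c α : ℝ) (hα0 : 0 < α) :
    Continuous (fun t : ℝ => (1-t)^α + c^(1-α) * t^α) := by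
  have hcα : Continuous (fun x : ℝ => x ^ α) :=
    continuous_iff_continuousAt.2 fun x => Real.continuousAt_rpow_const x α (Or.inr hα0.le)
  exact (hcα.comp (continuous_const.sub continuous_id)).add (continuous_const.mul hcα)

lemma aux_interior {c t : ℝ} (hc : 0 ≤ c) (ht : t ∈ interior (Set.Icc 0 (c/(c+1)))) :
    0 < t ∧ t < 1 ∧ 0 < c ∧ t / c ≤ 1 - t := by
  rw [interior_Icc] at ht
  obtain ⟨ht0, ht1⟩ := ht
  have hc1 : (0:ℝ) < c + 1 := by linarith
  have hcpos : 0 < c := by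
    rcases eq_or_lt_of_le hc with h | h
    · exfalso; rw [← h] at ht1; simp at ht1; linarith
    · exact h
  have htc : t * (c + 1) < c := (lt_div_iff₀ hc1).1 ht1
  have ht1' : t < 1 := by nlinarith
  refine ⟨ht0, ht1', hcpos, ?_⟩
  rw [div_le_iff₀ hcpos]
  nlinarith

lemma aux_mono {c α : ℝ} (hc : 0 ≤ c) (hα0 : 0 < α) (hα1 : α < 1) :
    MonotoneOn (fun t => (1-t)^α + c^(1-α) * t^α) (Set.Icc 0 (c/(c+1))) := by
  apply monotoneOn_of_deriv_nonneg (convex_Icc _ _) (aux_cont c α hα0).continuousOn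
  · intro t ht
    obtain ⟨ht0, ht1, hcpos, _⟩ := aux_interior hc ht
    exact (aux_hasDerivAt c α t (by linarith) (ne_of_gt ht0)).differentiableAt.differentiableWithinAt
  · intro t ht
    obtain ⟨ht0, ht1, hcpos, htc⟩ := aux_interior hc ht
    rw [(aux_hasDerivAt c α t (by linarith) (ne_of_gt ht0)).deriv]
    have hkey : (1-t)^(α-1) ≤ c^(1-α) * t^(α-1) := by
      have he : c^(1-α) * t^(α-1) = (t/c)^(α-1) := by
        rw [Real.div_rpow ht0.le hc, (show (1:ℝ)-α = -(α-1) by ring), Real.rpow_neg hc]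
        ring
      rw [he]
      exact Real.rpow_le_rpow_of_nonpos (div_pos ht0 hcpos) htc (by linarith)
    nlinarith [Real.rpow_nonneg (show (0:ℝ) ≤ 1 - t by linarith) (α-1)]

lemma aux_anti {c α : ℝ} (hc : 0 ≤ c) (hα1 : 1 < α) :
    AntitoneOn (fun t => (1-t)^α + c^(1-α) * t^α) (Set.Icc 0 (c/(c+1))) := by
  have hα0 : (0:ℝ) < α := lt_trans one_pos hα1
  apply antitoneOn_of_deriv_nonpos (convex_Icc _ _) (aux_cont c α hα0).continuousOn
  · intro t ht
    obtain ⟨ht0, ht1, hcpos, _⟩ := aux_interior hc ht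
    exact (aux_hasDerivAt c α t (by linarith) (ne_of_gt ht0)).differentiableAt.differentiableWithinAt
  · intro t ht
    obtain ⟨ht0, ht1, hcpos, htc⟩ := aux_interior hc ht
    rw [(aux_hasDerivAt c α t (by linarith) (ne_of_gt ht0)).deriv]
    have hkey : c^(1-α) * t^(α-1) ≤ (1-t)^(α-1) := by
      have he : c^(1-α) * t^(α-1) = (t/c)^(α-1) := by
        rw [Real.div_rpow ht0.le hc, (show (1:ℝ)-α = -(α-1) by ring), Real.rpow_neg hc]
        ring
      rw [he]
      exact Real.rpow_le_rpow (by positivity) htc (by linarith)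
    nlinarith [Real.rpow_nonneg (show (0:ℝ) ≤ t by linarith) (α-1)]

theorem stmt_18 (n : ℕ) (hn : 1 ≤ n) (P : Fin n → ℝ) (hP : ∀ i, 0 ≤ P i)
    (hsum : ∑ i, P i = 1) (α : ℝ) (hα0 : 0 < α) (hα1 : α ≠ 1)
    (ε : ℝ) (hεl : 1 - ⨆ i, P i ≤ ε) (hεu : ε ≤ ((n : ℝ) - 1) / n) :
    (1 / (1 - α)) * Real.log (∑ i, P i ^ α)
      ≤ (1 / (1 - α)) * Real.log ((1 - ε) ^ α + ((n : ℝ) - 1) ^ (1 - α) * ε ^ α) := by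
  have hnR : (0:ℝ) < n := by exact_mod_cast hn
  set c : ℝ := (n:ℝ) - 1 with hc_def
  have hc : 0 ≤ c := by
    have : (1:ℝ) ≤ n := by exact_mod_cast hn
    simp only [hc_def]; linarith
  have hn' : c + 1 = (n:ℝ) := by simp only [hc_def]; ring
  haveI : Nonempty (Fin n) := ⟨⟨0, hn⟩⟩
  obtain ⟨i₀, hmax⟩ := Finite.exists_max P
  set m := P i₀ with hm_def
  have hsup : (⨆ i, P i) = m :=
    le_antisymm (ciSup_le hmax) (le_ciSup (Finite.bddAbove_range P) i₀)
  rw [hsup] at hεl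
  have hm1 : m ≤ 1 := by
    rw [← hsum]
    exact Finset.single_le_sum (fun i _ => hP i) (Finset.mem_univ i₀)
  have hnm : 1 ≤ (n:ℝ) * m := by
    have h := Finset.sum_le_sum (fun (i : Fin n) (_ : i ∈ Finset.univ) => hmax i)
    rw [hsum] at h
    simpa [Finset.sum_const, Finset.card_univ, nsmul_eq_mul] using h
  have hm0 : 0 < m := by nlinarith
  have hε0 : 0 ≤ ε := le_trans (by linarith) hεl
  have h1ε : 0 < 1 - ε := by
    have h2 : c / (n:ℝ) < 1 := by
      rw [div_lt_one hnR]; simp only [hc_def]; linarith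
    have := lt_of_le_of_lt hεu h2
    linarith
  have herase_card : (((Finset.univ.erase i₀).card : ℕ) : ℝ) = c := by
    rw [Finset.card_erase_of_mem (Finset.mem_univ i₀), Finset.card_univ, Fintype.card_fin,
      Nat.cast_sub hn]
    simp [hc_def]
  have herase_sum : ∑ i ∈ Finset.univ.erase i₀, P i = 1 - m := by
    rw [Finset.sum_erase_eq_sub (Finset.mem_univ i₀), hsum]
  have hsplit : ∑ i, P i ^ α = m ^ α + ∑ i ∈ Finset.univ.erase i₀, P i ^ α := by
    rw [← Finset.add_sum_erase _ _ (Finset.mem_univ i₀)]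
  have hcc : c / (c + 1) = c / (n:ℝ) := by rw [hn']
  have hmem1 : (1 - m) ∈ Set.Icc 0 (c/(c+1)) := by
    rw [Set.mem_Icc]
    constructor
    · linarith
    · rw [hcc, le_div_iff₀ hnR]
      simp only [hc_def]; nlinarith
  have hmem2 : ε ∈ Set.Icc 0 (c/(c+1)) := ⟨hε0, by rw [hcc]; exact hεu⟩
  have hposSum : 0 < ∑ i, P i ^ α := by
    have h1 : (0:ℝ) < m ^ α := Real.rpow_pos_of_pos hm0 α
    have h2 : 0 ≤ ∑ i ∈ Finset.univ.erase i₀, P i ^ α :=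
      Finset.sum_nonneg fun i _ => Real.rpow_nonneg (hP i) α
    rw [hsplit]; linarith
  rcases lt_or_gt_of_ne hα1 with hlt | hgt
  · have key1 : ∑ i, P i ^ α ≤ m ^ α + c ^ (1-α) * (1-m) ^ α := by
      rw [hsplit]
      have h := aux_sum_rpow_le (Finset.univ.erase i₀) P (fun i _ => hP i) hα0 hlt.le
      rw [herase_card, herase_sum] at h
      linarith
    have key2 := aux_mono hc hα0 hlt hmem1 hmem2 hεl
    simp only [sub_sub_cancel] at key2
    have chain : ∑ i, P i ^ α ≤ (1-ε)^α + c^(1-α) * ε^α := by linarith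
    have hfrac : (0:ℝ) ≤ 1/(1-α) := by
      apply div_nonneg one_pos.le; linarith
    exact mul_le_mul_of_nonneg_left (Real.log_le_log hposSum chain) hfrac
  · have key1 : m ^ α + c ^ (1-α) * (1-m) ^ α ≤ ∑ i, P i ^ α := by
      rw [hsplit]
      have h := aux_card_rpow_le_sum (Finset.univ.erase i₀) P (fun i _ => hP i) hgt.le
      rw [herase_card, herase_sum] at h
      linarith
    have key2 := aux_anti hc hgt hmem1 hmem2 hεl
    simp only [sub_sub_cancel] at key2
    have chain : (1-ε)^α + c^(1-α) * ε^α ≤ ∑ i, P i ^ α := by linarith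
    have hposR : 0 < (1-ε)^α + c^(1-α) * ε^α := by
      have h1 := Real.rpow_pos_of_pos h1ε α
      have h2 : 0 ≤ c^(1-α) * ε^α :=
        mul_nonneg (Real.rpow_nonneg hc _) (Real.rpow_nonneg hε0 _)
      linarith
    have hfrac : 1/(1-α) ≤ 0 := by
      apply div_nonpos_of_nonneg_of_nonpos one_pos.le; linarith
    exact mul_le_mul_of_nonpos_left (Real.log_le_log hposR chain) hfrac
end

section
/- Let X be a random variable on a finite alphabet 𝒳 with n = |𝒳| ≥ 2, let Z = (1/(n-1))·Σ_{x≠x'} √(P_X(x)·P_X(x')) be the (unconditional) Bhattacharyya parameter, and let ε = 1 − max_x P_X(x). If ε ≤ (n-1)/n, then Z ≤ ((n-2)/(n-1))·ε + 2·√(ε(1-ε)/(n-1)). -/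
/-!
Since `√(P x * P y) = √(P x) * √(P y)`, the off-diagonal sum equals `(∑ √P)² - 1`, i.e.
`exp H_{1/2}(X) - 1`. Splitting off a most likely point `i` (mass `1 - ε`) and applying
Cauchy–Schwarz to the remaining `n - 1` points (total mass `ε`) gives
`∑ √P ≤ √(1 - ε) + √((n - 1) ε)`; squaring and dividing by `n - 1` yields the bound.
-/

open Finset Real

theorem sum_sqrt_le_sqrt_card_mul_sum {ι : Type*} (s : Finset ι) {f : ι → ℝ}
    (hf : ∀ i, 0 ≤ f i) : ∑ i ∈ s, √(f i) ≤ √(#s * ∑ i ∈ s, f i) := by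
  calc ∑ i ∈ s, √(f i) = ∑ i ∈ s, √(f i) * √1 := by simp
    _ ≤ √(∑ i ∈ s, f i) * √(∑ i ∈ s, 1) := sum_sqrt_mul_sqrt_le s hf fun _ ↦ zero_le_one
    _ = √(#s * ∑ i ∈ s, f i) := by
      rw [← sqrt_mul (sum_nonneg fun i _ ↦ hf i), mul_comm]
      simp

theorem sum_sum_ite_ne_sqrt_mul {ι : Type*} [Fintype ι] [DecidableEq ι] {P : ι → ℝ}
    (hP : ∀ i, 0 ≤ P i) :
    ∑ x, ∑ y, (if x ≠ y then √(P x * P y) else 0) = (∑ i, √(P i)) ^ 2 - ∑ i, P i := by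
  have hterm : ∀ x y, (if x ≠ y then √(P x * P y) else 0)
      = √(P x) * √(P y) - if x = y then P x else 0 := by
    intro x y
    by_cases h : x = y
    · simp [h, mul_self_sqrt (hP y)]
    · simp [h, sqrt_mul (hP x)]
  simp only [hterm, sum_sub_distrib, sum_ite_eq, mem_univ, if_true, sq, sum_mul_sum]

/- The Rényi–Fano bound for `H_{1/2}`: Cauchy–Schwarz on the `card ι - 1` points other than `i`. -/
theorem sum_sqrt_le_sqrt_add_sqrt_card_sub_one_mul {ι : Type*} [Fintype ι] [DecidableEq ι]
    {P : ι → ℝ} (hP : ∀ i, 0 ≤ P i) (i : ι) :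
    ∑ j, √(P j) ≤ √(P i) + √((Fintype.card ι - 1) * (∑ j, P j - P i)) := by
  have hcard : ((#(univ.erase i) : ℕ) : ℝ) = Fintype.card ι - 1 := by
    have : Nonempty ι := ⟨i⟩
    rw [card_erase_of_mem (mem_univ i), card_univ, Nat.cast_sub Fintype.card_pos]
    simp
  rw [← add_sum_erase _ _ (mem_univ i), ← add_sum_erase _ P (mem_univ i), add_sub_cancel_left,
    ← hcard]
  gcongr
  exact sum_sqrt_le_sqrt_card_mul_sum _ hP

theorem sq_sqrt_add_sqrt_sub_one_div_eq {n ε : ℝ} (hn : 1 < n) (hε₀ : 0 ≤ ε) (hε₁ : ε ≤ 1) :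
    ((√(1 - ε) + √((n - 1) * ε)) ^ 2 - 1) / (n - 1)
      = (n - 2) / (n - 1) * ε + 2 * √(ε * (1 - ε) / (n - 1)) := by
  have hn₀ : 0 < n - 1 := by linarith
  have hcross : √(1 - ε) * √((n - 1) * ε) = (n - 1) * √(ε * (1 - ε) / (n - 1)) := by
    rw [← sqrt_mul (by linarith),
      show (1 - ε) * ((n - 1) * ε) = (n - 1) ^ 2 * (ε * (1 - ε) / (n - 1)) by field_simp,
      sqrt_mul (sq_nonneg _), sqrt_sq hn₀.le]
  rw [add_sq, mul_assoc, hcross, sq_sqrt (by linarith), sq_sqrt (by positivity)]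
  field_simp
  ring

theorem stmt_19_general (n : ℕ) (hn : 2 ≤ n) (P : Fin n → ℝ) (hP : ∀ i, 0 ≤ P i)
    (hsum : ∑ i, P i = 1) (Z ε : ℝ)
    (hZ : Z = (1 / ((n : ℝ) - 1))
        * ∑ x, ∑ y, if x ≠ y then Real.sqrt (P x * P y) else 0)
    (hε : ε = 1 - ⨆ i, P i) :
    Z ≤ (((n : ℝ) - 2) / ((n : ℝ) - 1)) * ε
        + 2 * Real.sqrt (ε * (1 - ε) / ((n : ℝ) - 1)) := by
  have hn₁ : (1 : ℝ) < n := by exact_mod_cast hn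
  have : Nonempty (Fin n) := ⟨⟨0, by omega⟩⟩
  obtain ⟨i, hi⟩ := exists_eq_ciSup_of_finite (f := P)
  have hPi : P i ≤ 1 := hsum ▸ single_le_sum (fun j _ ↦ hP j) (mem_univ i)
  rw [hε, ← hi, ← sq_sqrt_add_sqrt_sub_one_div_eq hn₁ (by linarith) (by linarith [hP i]), hZ,
    one_div_mul_eq_div, sum_sum_ite_ne_sqrt_mul hP, hsum, sub_sub_cancel]
  gcongr
  simpa [hsum] using sum_sqrt_le_sqrt_add_sqrt_card_sub_one_mul hP i

theorem stmt_19 (n : ℕ) (hn : 2 ≤ n) (P : Fin n → ℝ) (hP : ∀ i, 0 ≤ P i)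
    (hsum : ∑ i, P i = 1) (Z ε : ℝ)
    (hZ : Z = (1 / ((n : ℝ) - 1))
        * ∑ x, ∑ y, if x ≠ y then Real.sqrt (P x * P y) else 0)
    (hε : ε = 1 - ⨆ i, P i) (hεu : ε ≤ ((n : ℝ) - 1) / n) :
    Z ≤ (((n : ℝ) - 2) / ((n : ℝ) - 1)) * ε
        + 2 * Real.sqrt (ε * (1 - ε) / ((n : ℝ) - 1)) :=
  stmt_19_general n hn P hP hsum Z ε hZ hε
end
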